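/- arXiv:2108.13060 — 5 statements merged into one kernel-verified Lean document; each statement's English description precedes it below -/
import Mathlib

section
/- For every even integer n with n ≥ 8 and n ≡ 0 (mod 4), and every n×n distance matrix D on the n teams (symmetric, nonnegative, zero diagonal, satisfying the triangle inequality), there exists a feasible TTP-2 schedule on the n teams. -/
open Finset

/-- `D` is a distance matrix: zero diagonal, symmetric, nonnegative,
and satisfying the triangle inequality. -/
def IsDistMatrix {n : ℕ} (D : Fin n → Fin n → ℝ) : Prop :=
  (∀ i, D i i = 0) ∧ (∀ i j, D i j = D j i) ∧ (∀ i j, 0 ≤ D i j) ∧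
    (∀ i j k, D i j ≤ D i k + D k j)

/-- A perfect matching of the complete graph on `Fin n`, represented as a
fixed-point-free involution sending each vertex to its partner. -/
def IsPM {n : ℕ} (p : Fin n → Fin n) : Prop :=
  (∀ i, p (p i) = i) ∧ ∀ i, p i ≠ i

/-- The weight of a perfect matching `p` w.r.t. the (symmetric) weights `D`:
each matching edge `{i, p i}` is counted twice in the sum, hence the division by 2. -/
noncomputable def pmWeight {n : ℕ} (D : Fin n → Fin n → ℝ) (p : Fin n → Fin n) : ℝ :=
  (∑ i, D i (p i)) / 2

/-- `D_G`: the sum of `D` over all unordered pairs of distinct vertices. -/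
noncomputable def sumPairs {n : ℕ} (D : Fin n → Fin n → ℝ) : ℝ :=
  (∑ i, ∑ j ∈ Finset.univ \ {i}, D i j) / 2

/-- A feasible TTP-2 schedule on `n` teams.  On each of the `2*(n-1)` days
(indexed `0, …, 2*(n-1)-1`) the teams are partitioned into `n/2` games:
`opp d i` is the opponent of team `i` on day `d` (so each team plays exactly one
game per day) and `home d i` tells whether team `i` plays that game at home. -/
structure TTP2Schedule (n : ℕ) where
  opp : ℕ → Fin n → Fin n
  home : ℕ → Fin n → Bool
  /-- no team plays itself -/
  opp_ne : ∀ d, d < 2 * (n - 1) → ∀ i, opp d i ≠ i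
  /-- opponents are mutual: the day's games pair up the teams -/
  opp_invol : ∀ d, d < 2 * (n - 1) → ∀ i, opp d (opp d i) = i
  /-- in each game exactly one of the two teams is at home -/
  home_away : ∀ d, d < 2 * (n - 1) → ∀ i, home d (opp d i) = !home d i
  /-- every ordered pair `(i,j)` of distinct teams has exactly one day on which
  `i` plays away at `j`'s home -/
  plays_once : ∀ i j : Fin n, i ≠ j →
    ∃! d : ℕ, d < 2 * (n - 1) ∧ opp d i = j ∧ home d i = false
  /-- no two teams play against each other on two consecutive days -/
  no_repeat : ∀ d, d + 1 < 2 * (n - 1) → ∀ i, opp (d + 1) i ≠ opp d i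
  /-- bounded-by-2: no three consecutive home games and no three consecutive
  away games for any team -/
  bounded_by_two : ∀ d, d + 2 < 2 * (n - 1) → ∀ i,
    ¬(home d i = home (d + 1) i ∧ home (d + 1) i = home (d + 2) i)

/-- The venue of team `i`'s game on day `d`. -/
def TTP2Schedule.venue {n : ℕ} (s : TTP2Schedule n) (d : ℕ) (i : Fin n) : Fin n :=
  if s.home d i then i else s.opp d i

/-- The travel distance of team `i` (direct traveling): start at home, travel
directly between consecutive venues, and return home after the last game. -/
noncomputable def TTP2Schedule.travel {n : ℕ} (D : Fin n → Fin n → ℝ)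
    (s : TTP2Schedule n) (i : Fin n) : ℝ :=
  D i (s.venue 0 i) +
    (∑ d ∈ Finset.range (2 * (n - 1) - 1), D (s.venue d i) (s.venue (d + 1) i)) +
    D (s.venue (2 * (n - 1) - 1) i) i

/-- The total traveling distance of a schedule. -/
noncomputable def TTP2Schedule.total {n : ℕ} (D : Fin n → Fin n → ℝ)
    (s : TTP2Schedule n) : ℝ :=
  ∑ i, s.travel D i



namespace TTPAux

/-- Round-level opponent in the circle method: `m` is the special team `∞`,
the other teams are `0, …, m-1` (indices mod `m`, `m` odd). -/
def oppR (m r x : ℕ) : ℕ :=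
  if x = m then r * ((m + 1) / 2) % m
  else if 2 * x % m = r then m
  else (r + m - x) % m

/-- Whether the special team `∞` is at home in round `r`. -/
def SP (r : ℕ) : Prop := r ≠ 0 ∧ (r = 1 ∨ r % 2 = 0)

instance (r : ℕ) : Decidable (SP r) := by unfold SP; infer_instance

/-- Whether team `x` is at home in round `r` (first half of the season). -/
def BH (m r x : ℕ) : Prop :=
  if x = m then SP r
  else if 2 * x % m = r then ¬ SP r
  else (2 * x % m + m - r) % m % 2 = 1

instance (m r x : ℕ) : Decidable (BH m r x) := by unfold BH; infer_instance

lemma dec2m {m : ℕ} (h0 : 0 < m) {e : ℕ} (he : e < 2 * m) :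
    (e % m = e ∧ e < m) ∨ (e % m = e - m ∧ m ≤ e ∧ e - m < m) := by
  rcases Nat.lt_or_ge e m with h | h
  · exact Or.inl ⟨Nat.mod_eq_of_lt h, h⟩
  · refine Or.inr ⟨?_, h, by omega⟩
    rw [Nat.mod_eq_sub_mod h, Nat.mod_eq_of_lt (by omega)]

variable {m r r' x y t t' : ℕ}

lemma two_mul_halve (hr : r < m) (h2 : 2 * ((m + 1) / 2) = m + 1) :
    2 * (r * ((m + 1) / 2) % m) % m = r := by
  have e1 : 2 * (r * ((m + 1) / 2) % m) % m = 2 * (r * ((m + 1) / 2)) % m :=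
    ((Nat.mod_modEq (r * ((m + 1) / 2)) m).mul_left 2 : _)
  have e2 : 2 * (r * ((m + 1) / 2)) = r + r * m := by
    rw [show (2:ℕ) * (r * ((m+1)/2)) = r * (2 * ((m+1)/2)) by ring, h2]; ring
  rw [e1, e2, Nat.add_mul_mod_self_right, Nat.mod_eq_of_lt hr]

lemma halve_unique (hm : m % 2 = 1) (ht : t < m) (ht' : t' < m)
    (h : 2 * t % m = 2 * t' % m) : t = t' := by
  have h0 : 0 < m := by omega
  have d1 := dec2m h0 (show 2 * t < 2 * m by omega)
  have d2 := dec2m h0 (show 2 * t' < 2 * m by omega)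
  omega

lemma oppR_le (h0 : 0 < m) : oppR m r x ≤ m := by
  unfold oppR
  split_ifs
  · exact (Nat.mod_lt _ h0).le
  · exact le_rfl
  · exact (Nat.mod_lt _ h0).le

lemma oppR_ne (hm : m % 2 = 1) (hr : r < m) (hx : x ≤ m) : oppR m r x ≠ x := by
  have h0 : 0 < m := by omega
  unfold oppR
  split_ifs with h1 h2
  · subst h1; exact (Nat.mod_lt _ h0).ne
  · exact fun hc => h1 hc.symm
  · have hx' : x < m := by omega
    have d1 := dec2m h0 (show r + m - x < 2 * m by omega)
    have d2 := dec2m h0 (show 2 * x < 2 * m by omega)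
    omega

/-- The round in which `x` hosts-or-visits `y` (one game per round-robin). -/
def tR (m x y : ℕ) : ℕ :=
  if x = m then 2 * y % m else if y = m then 2 * x % m else (x + y) % m

lemma tR_lt (h0 : 0 < m) : tR m x y < m := by
  unfold tR; split_ifs <;> exact Nat.mod_lt _ h0

lemma oppR_tR (hm : m % 2 = 1) (h7 : 7 ≤ m) (hx : x ≤ m) (hy : y ≤ m) (hxy : x ≠ y) :
    oppR m (tR m x y) x = y := by
  have h0 : 0 < m := by omega
  have h2 : 2 * ((m + 1) / 2) = m + 1 := by omega
  unfold tR oppR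
  by_cases hxm : x = m
  · rw [if_pos hxm, if_pos hxm]
    have hy' : y < m := by omega
    exact halve_unique hm (Nat.mod_lt _ h0) hy'
      (by rw [two_mul_halve (Nat.mod_lt _ h0) h2])
  · rw [if_neg hxm, if_neg hxm]
    by_cases hym : y = m
    · rw [if_pos hym, if_pos rfl, hym]
    · rw [if_neg hym]
      have hx' : x < m := by omega
      have hy' : y < m := by omega
      have hne : ¬ (2 * x % m = (x + y) % m) := by
        have d1 := dec2m h0 (show 2 * x < 2 * m by omega)
        have d2 := dec2m h0 (show x + y < 2 * m by omega)
        omega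
      rw [if_neg hne]
      have hlt : (x + y) % m < m := Nat.mod_lt _ h0
      have d2 := dec2m h0 (show x + y < 2 * m by omega)
      have d3 := dec2m h0 (show (x + y) % m + m - x < 2 * m by omega)
      omega

lemma oppR_round_unique (hm : m % 2 = 1) (h7 : 7 ≤ m) (hr : r < m) (hx : x ≤ m)
    (hy : y ≤ m) (h : oppR m r x = y) : r = tR m x y := by
  have h0 : 0 < m := by omega
  have h2 : 2 * ((m + 1) / 2) = m + 1 := by omega
  unfold oppR at h; unfold tR
  by_cases hxm : x = m
  · rw [if_pos hxm] at h
    rw [if_pos hxm, ← h]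
    exact (two_mul_halve hr h2).symm
  · rw [if_neg hxm] at h
    rw [if_neg hxm]
    by_cases hc : 2 * x % m = r
    · rw [if_pos hc] at h
      rw [if_pos h.symm]
      exact hc.symm
    · rw [if_neg hc] at h
      have hym : y ≠ m := by rw [← h]; exact (Nat.mod_lt _ h0).ne
      rw [if_neg hym]
      have hx' : x < m := by omega
      have d1 := dec2m h0 (show r + m - x < 2 * m by omega)
      have d2 := dec2m h0 (show x + y < 2 * m by omega)
      omega

lemma oppR_invol (hm : m % 2 = 1) (h7 : 7 ≤ m) (hr : r < m) (hx : x ≤ m) :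
    oppR m r (oppR m r x) = x := by
  have h0 : 0 < m := by omega
  have h2 : 2 * ((m + 1) / 2) = m + 1 := by omega
  unfold oppR
  by_cases hxm : x = m
  · rw [if_pos hxm]
    have htm : r * ((m + 1) / 2) % m < m := Nat.mod_lt _ h0
    rw [if_neg htm.ne, if_pos (two_mul_halve hr h2), hxm]
  · rw [if_neg hxm]
    have hx' : x < m := by omega
    by_cases hc : 2 * x % m = r
    · rw [if_pos hc, if_pos rfl]
      exact halve_unique hm (Nat.mod_lt _ h0) hx'
        (by rw [two_mul_halve hr h2, ← hc])
    · rw [if_neg hc]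
      have hym : (r + m - x) % m < m := Nat.mod_lt _ h0
      have d3 := dec2m h0 (show r + m - x < 2 * m by omega)
      have h2y : ¬ (2 * ((r + m - x) % m) % m = r) := by
        have d1 := dec2m h0 (show 2 * ((r + m - x) % m) < 2 * m by omega)
        have d2 := dec2m h0 (show 2 * x < 2 * m by omega)
        omega
      rw [if_neg hym.ne, if_neg h2y]
      have d4 := dec2m h0 (show r + m - (r + m - x) % m < 2 * m by omega)
      omega

lemma BH_flip (hm : m % 2 = 1) (h7 : 7 ≤ m) (hr : r < m) (hx : x ≤ m) :
    BH m r (oppR m r x) ↔ ¬ BH m r x := by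
  have h0 : 0 < m := by omega
  have h2 : 2 * ((m + 1) / 2) = m + 1 := by omega
  unfold oppR
  by_cases hxm : x = m
  · rw [if_pos hxm]
    have htm : r * ((m + 1) / 2) % m < m := Nat.mod_lt _ h0
    unfold BH
    rw [if_neg htm.ne, if_pos (two_mul_halve hr h2), if_pos hxm]
  · rw [if_neg hxm]
    have hx' : x < m := by omega
    by_cases hc : 2 * x % m = r
    · rw [if_pos hc]
      unfold BH
      rw [if_pos rfl, if_neg hxm, if_pos hc]
      exact not_not.symm
    · rw [if_neg hc]
      have hym : (r + m - x) % m < m := Nat.mod_lt _ h0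
      have d3 := dec2m h0 (show r + m - x < 2 * m by omega)
      have h2y : ¬ (2 * ((r + m - x) % m) % m = r) := by
        have d1 := dec2m h0 (show 2 * ((r + m - x) % m) < 2 * m by omega)
        have d2 := dec2m h0 (show 2 * x < 2 * m by omega)
        omega
      unfold BH
      rw [if_neg hym.ne, if_neg h2y, if_neg hxm, if_neg hc]
      have d1 := dec2m h0 (show 2 * ((r + m - x) % m) < 2 * m by omega)
      have d2 := dec2m h0 (show 2 * x < 2 * m by omega)
      have hby : 2 * ((r + m - x) % m) % m < m := Nat.mod_lt _ h0
      have hbx : 2 * x % m < m := Nat.mod_lt _ h0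
      have d4 := dec2m h0 (show 2 * ((r + m - x) % m) % m + m - r < 2 * m by omega)
      have d5 := dec2m h0 (show 2 * x % m + m - r < 2 * m by omega)
      omega

lemma BH_A (hm : m % 2 = 1) (h7 : 7 ≤ m) (hr2 : r + 2 < m) (hx : x ≤ m) :
    ¬((BH m r x ↔ BH m (r + 1) x) ∧ (BH m (r + 1) x ↔ BH m (r + 2) x)) := by
  have h0 : 0 < m := by omega
  unfold BH SP
  by_cases hxm : x = m
  · rw [if_pos hxm, if_pos hxm, if_pos hxm]
    omega
  · rw [if_neg hxm, if_neg hxm, if_neg hxm]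
    have hx' : x < m := by omega
    have hbx : 2 * x % m < m := Nat.mod_lt _ h0
    have d2 := dec2m h0 (show 2 * x < 2 * m by omega)
    have d5 := dec2m h0 (show 2 * x % m + m - r < 2 * m by omega)
    have d6 := dec2m h0 (show 2 * x % m + m - (r + 1) < 2 * m by omega)
    have d7 := dec2m h0 (show 2 * x % m + m - (r + 2) < 2 * m by omega)
    split_ifs <;> omega

lemma BH_C (hm : m % 2 = 1) (h7 : 7 ≤ m) (hx : x ≤ m) :
    ¬(BH m (m - 2) x ↔ BH m (m - 1) x) := by
  have h0 : 0 < m := by omega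
  unfold BH SP
  by_cases hxm : x = m
  · rw [if_pos hxm, if_pos hxm]
    omega
  · rw [if_neg hxm, if_neg hxm]
    have hx' : x < m := by omega
    have hbx : 2 * x % m < m := Nat.mod_lt _ h0
    have d2 := dec2m h0 (show 2 * x < 2 * m by omega)
    have d5 := dec2m h0 (show 2 * x % m + m - (m - 2) < 2 * m by omega)
    have d6 := dec2m h0 (show 2 * x % m + m - (m - 1) < 2 * m by omega)
    split_ifs <;> omega

lemma BH_D (hm : m % 2 = 1) (h7 : 7 ≤ m) (hx : x ≤ m) :
    ¬((BH m (m - 1) x ↔ ¬ BH m 0 x) ∧ (BH m 0 x ↔ BH m 1 x)) := by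
  have h0 : 0 < m := by omega
  unfold BH SP
  by_cases hxm : x = m
  · rw [if_pos hxm, if_pos hxm, if_pos hxm]
    omega
  · rw [if_neg hxm, if_neg hxm, if_neg hxm]
    have hx' : x < m := by omega
    have hbx : 2 * x % m < m := Nat.mod_lt _ h0
    have d2 := dec2m h0 (show 2 * x < 2 * m by omega)
    have d5 := dec2m h0 (show 2 * x % m + m - (m - 1) < 2 * m by omega)
    have d6 := dec2m h0 (show 2 * x % m + m - 0 < 2 * m by omega)
    have d7 := dec2m h0 (show 2 * x % m + m - 1 < 2 * m by omega)
    split_ifs <;> omega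

end TTPAux

namespace TTPAux

/-- Day-level opponent. -/
def sOpp (m d : ℕ) (i : Fin (m + 1)) : Fin (m + 1) :=
  ⟨min (oppR m (d % m) i.val) m, by omega⟩

/-- Day-level home/away. -/
def sHome (m d : ℕ) (i : Fin (m + 1)) : Bool :=
  decide (if m ≤ d then ¬ BH m (d % m) i.val else BH m (d % m) i.val)

lemma sOpp_val {m : ℕ} (h0 : 0 < m) (d : ℕ) (i : Fin (m + 1)) :
    (sOpp m d i).val = oppR m (d % m) i.val :=
  min_eq_left (oppR_le h0)

lemma sHome_eq_decide {m : ℕ} (d : ℕ) (i : Fin (m + 1)) :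
    sHome m d i = decide (if m ≤ d then ¬ BH m (d % m) i.val else BH m (d % m) i.val) := rfl

end TTPAux

theorem ttp2_feasible_schedule_exists' (n : ℕ) (hn : Even n) (h8 : 8 ≤ n) :
    Nonempty (TTP2Schedule n) := by
  obtain ⟨m, rfl⟩ : ∃ m, n = m + 1 := ⟨n - 1, by omega⟩
  have hm : m % 2 = 1 := by obtain ⟨k, hk⟩ := hn; omega
  have h7 : 7 ≤ m := by omega
  have h0 : 0 < m := by omega
  refine ⟨⟨TTPAux.sOpp m, TTPAux.sHome m, ?_, ?_, ?_, ?_, ?_, ?_⟩⟩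
  · -- opp_ne
    intro d _ i
    refine Fin.ne_of_val_ne ?_
    rw [TTPAux.sOpp_val h0]
    exact TTPAux.oppR_ne hm (Nat.mod_lt _ h0) (Nat.lt_succ_iff.mp i.isLt)
  · -- opp_invol
    intro d _ i
    apply Fin.ext
    rw [TTPAux.sOpp_val h0, TTPAux.sOpp_val h0]
    exact TTPAux.oppR_invol hm h7 (Nat.mod_lt _ h0) (Nat.lt_succ_iff.mp i.isLt)
  · -- home_away
    intro d _ i
    rw [TTPAux.sHome_eq_decide, TTPAux.sHome_eq_decide, ← decide_not, decide_eq_decide,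
      TTPAux.sOpp_val h0]
    have hf := TTPAux.BH_flip hm h7 (Nat.mod_lt d h0) (Nat.lt_succ_iff.mp i.isLt)
    split_ifs with hmd
    · exact not_congr hf
    · exact hf
  · -- plays_once
    intro i j hij
    have hx : i.val ≤ m := Nat.lt_succ_iff.mp i.isLt
    have hy : j.val ≤ m := Nat.lt_succ_iff.mp j.isLt
    have hxy : i.val ≠ j.val := fun h => hij (Fin.ext h)
    set r := TTPAux.tR m i.val j.val with hrdef
    have hrm : r < m := TTPAux.tR_lt h0
    have hopp : TTPAux.oppR m r i.val = j.val := TTPAux.oppR_tR hm h7 hx hy hxy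
    have hmod : (r + m) % m = r := by rw [Nat.add_mod_right, Nat.mod_eq_of_lt hrm]
    have hOppIff : ∀ d : ℕ, TTPAux.sOpp m d i = j ↔ d % m = r := by
      intro d
      constructor
      · intro h
        have hv : TTPAux.oppR m (d % m) i.val = j.val := by
          rw [← TTPAux.sOpp_val h0 d i, h]
        exact TTPAux.oppR_round_unique hm h7 (Nat.mod_lt _ h0) hx hy hv
      · intro h
        apply Fin.ext
        rw [TTPAux.sOpp_val h0, h, hopp]
    have hHome1 : TTPAux.sHome m r i = decide (TTPAux.BH m r i.val) := by
      rw [TTPAux.sHome_eq_decide, Nat.mod_eq_of_lt hrm]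
      exact decide_eq_decide.mpr (by rw [if_neg (show ¬ m ≤ r by omega)])
    have hHome2 : TTPAux.sHome m (r + m) i = decide (¬ TTPAux.BH m r i.val) := by
      rw [TTPAux.sHome_eq_decide, hmod]
      exact decide_eq_decide.mpr (by rw [if_pos (show m ≤ r + m by omega)])
    by_cases hb : TTPAux.BH m r i.val
    · refine ⟨r + m, ⟨by omega, (hOppIff _).mpr hmod, by rw [hHome2]; simp [hb]⟩, ?_⟩
      rintro d' ⟨hd1, hd2, hd3⟩
      have hmem : d' % m = r := (hOppIff d').mp hd2
      have hd2m : d' = r ∨ d' = r + m := by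
        have := TTPAux.dec2m h0 (show d' < 2 * m by omega)
        omega
      rcases hd2m with rfl | rfl
      · rw [hHome1] at hd3; simp [hb] at hd3
      · rfl
    · refine ⟨r, ⟨by omega, (hOppIff _).mpr (Nat.mod_eq_of_lt hrm),
        by rw [hHome1]; simp [hb]⟩, ?_⟩
      rintro d' ⟨hd1, hd2, hd3⟩
      have hmem : d' % m = r := (hOppIff d').mp hd2
      have hd2m : d' = r ∨ d' = r + m := by
        have := TTPAux.dec2m h0 (show d' < 2 * m by omega)
        omega
      rcases hd2m with rfl | rfl
      · rfl
      · rw [hHome2] at hd3; simp [hb] at hd3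
  · -- no_repeat
    intro d hd i hc
    have hx : i.val ≤ m := Nat.lt_succ_iff.mp i.isLt
    have hv : TTPAux.oppR m ((d + 1) % m) i.val = TTPAux.oppR m (d % m) i.val := by
      have := congrArg Fin.val hc
      rwa [TTPAux.sOpp_val h0, TTPAux.sOpp_val h0] at this
    have hyle : TTPAux.oppR m (d % m) i.val ≤ m := TTPAux.oppR_le h0
    have e1 := TTPAux.oppR_round_unique hm h7 (Nat.mod_lt (d + 1) h0) hx hyle hv
    have e2 := TTPAux.oppR_round_unique hm h7 (Nat.mod_lt d h0) hx hyle rfl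
    have e3 : (d + 1) % m = (d % m + 1) % m := by
      rw [Nat.add_mod, Nat.mod_eq_of_lt (show 1 < m by omega)]
    have hdm : d % m < m := Nat.mod_lt d h0
    have d4 := TTPAux.dec2m h0 (show d % m + 1 < 2 * m by omega)
    omega
  · -- bounded_by_two
    intro d hd i
    rintro ⟨h1, h2⟩
    have hx : i.val ≤ m := Nat.lt_succ_iff.mp i.isLt
    have hd' : d + 2 < 2 * m := by omega
    have H1 : (if m ≤ d then ¬ TTPAux.BH m (d % m) i.val else TTPAux.BH m (d % m) i.val) ↔
        (if m ≤ d + 1 then ¬ TTPAux.BH m ((d + 1) % m) i.val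
          else TTPAux.BH m ((d + 1) % m) i.val) := decide_eq_decide.mp h1
    have H2 : (if m ≤ d + 1 then ¬ TTPAux.BH m ((d + 1) % m) i.val
          else TTPAux.BH m ((d + 1) % m) i.val) ↔
        (if m ≤ d + 2 then ¬ TTPAux.BH m ((d + 2) % m) i.val
          else TTPAux.BH m ((d + 2) % m) i.val) := decide_eq_decide.mp h2
    have hcase : d + 2 < m ∨ m ≤ d ∨ d = m - 2 ∨ d = m - 1 := by omega
    rcases hcase with hc | hc | rfl | rfl
    · rw [if_neg (by omega), if_neg (by omega), Nat.mod_eq_of_lt (by omega),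
        Nat.mod_eq_of_lt (by omega)] at H1
      rw [if_neg (by omega), if_neg (by omega), Nat.mod_eq_of_lt (by omega),
        Nat.mod_eq_of_lt (by omega)] at H2
      exact TTPAux.BH_A hm h7 hc hx ⟨H1, H2⟩
    · have m1 : d % m = d - m := by
        rw [Nat.mod_eq_sub_mod hc, Nat.mod_eq_of_lt (by omega)]
      have m2 : (d + 1) % m = d - m + 1 := by
        rw [Nat.mod_eq_sub_mod (by omega), Nat.mod_eq_of_lt (by omega)]
        omega
      have m3 : (d + 2) % m = d - m + 2 := by
        rw [Nat.mod_eq_sub_mod (by omega), Nat.mod_eq_of_lt (by omega)]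
        omega
      rw [if_pos hc, if_pos (by omega), m1, m2] at H1
      rw [if_pos (by omega), if_pos (by omega), m2, m3] at H2
      exact TTPAux.BH_A hm h7 (show (d - m) + 2 < m by omega) hx
        ⟨not_iff_not.mp H1, not_iff_not.mp H2⟩
    · rw [show m - 2 + 1 = m - 1 by omega] at H1
      rw [show m - 2 + 1 = m - 1 by omega, show m - 2 + 2 = m by omega] at H2
      rw [if_neg (by omega), if_neg (by omega), Nat.mod_eq_of_lt (by omega),
        Nat.mod_eq_of_lt (by omega)] at H1
      exact TTPAux.BH_C hm h7 hx H1
    · rw [show m - 1 + 1 = m by omega] at H1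
      rw [show m - 1 + 1 = m by omega, show m - 1 + 2 = m + 1 by omega] at H2
      have hm1 : (m + 1) % m = 1 := by
        rw [Nat.add_mod_left, Nat.mod_eq_of_lt (show 1 < m by omega)]
      rw [if_neg (by omega), if_pos le_rfl, Nat.mod_eq_of_lt (by omega), Nat.mod_self] at H1
      rw [if_pos le_rfl, if_pos (by omega), Nat.mod_self, hm1] at H2
      exact TTPAux.BH_D hm h7 hx ⟨H1, not_iff_not.mp H2⟩

/-- For every even `n` with `n ≥ 8` and `n ≡ 0 (mod 4)`, and every
distance matrix `D` on the `n` teams, there exists a feasible TTP-2 schedule. -/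
theorem ttp2_feasible_schedule_exists (n : ℕ) (hn : Even n) (h8 : 8 ≤ n)
    (h4 : n % 4 = 0) (D : Fin n → Fin n → ℝ) (hD : IsDistMatrix D) :
    Nonempty (TTP2Schedule n) :=
  ttp2_feasible_schedule_exists' n hn h8
end

section
/- In any feasible TTP-2 schedule on n teams with distance matrix D (symmetric, nonnegative, zero diagonal, triangle inequality), the travel distance of each team i is at least LB_i = D_i + D_M, where D_i = Σ_{j=1}^n D_{i,j} and D_M is the minimum weight of a perfect matching of the complete graph on the n teams with edge weights D. -/
open Finset

section Pairing
variable {α : Type*} [DecidableEq α]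

/-- Any finset of even cardinality admits a fixed-point-free involution on it
(identity outside). -/
theorem exists_fpf_invol : ∀ (F : Finset α), Even F.card →
    ∃ r : α → α, (∀ j, j ∉ F → r j = j) ∧
      (∀ j ∈ F, r j ∈ F ∧ r j ≠ j ∧ r (r j) = j) := by
  intro F
  induction F using Finset.strongInduction with
  | _ F ih =>
    intro hF
    rcases F.eq_empty_or_nonempty with rfl | ⟨a, ha⟩
    · exact ⟨id, fun j _ => rfl, fun j hj => absurd hj (Finset.notMem_empty j)⟩
    · have hcard : 2 ≤ F.card := by
        rcases hF with ⟨k, hk⟩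
        have : 0 < F.card := Finset.card_pos.2 ⟨a, ha⟩
        omega
      have hne : (F.erase a).Nonempty := by
        rw [← Finset.card_pos, Finset.card_erase_of_mem ha]; omega
      obtain ⟨b, hb⟩ := hne
      have hba : b ≠ a := Finset.ne_of_mem_erase hb
      have hbF : b ∈ F := Finset.mem_of_mem_erase hb
      set F' : Finset α := (F.erase a).erase b with hF'
      have hF'sub : F' ⊂ F := by
        apply Finset.ssubset_of_subset_of_ssubset (Finset.erase_subset _ _)
        exact Finset.erase_ssubset ha
      have hcardF' : F'.card = F.card - 2 := by
        rw [hF', Finset.card_erase_of_mem hb, Finset.card_erase_of_mem ha]; omega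
      have hevF' : Even F'.card := by
        rw [hcardF']; rcases hF with ⟨k, hk⟩; exact ⟨k - 1, by omega⟩
      obtain ⟨r', hr'1, hr'2⟩ := ih F' hF'sub hevF'
      have haF' : a ∉ F' := by simp [hF']
      have hbF' : b ∉ F' := by simp [hF']
      refine ⟨fun j => if j = a then b else if j = b then a else r' j, ?_, ?_⟩
      · intro j hj
        have hja : j ≠ a := fun h => hj (h ▸ ha)
        have hjb : j ≠ b := fun h => hj (h ▸ hbF)
        simp only [if_neg hja, if_neg hjb]
        exact hr'1 j (fun h => hj (Finset.mem_of_mem_erase (Finset.mem_of_mem_erase h)))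
      · intro j hj
        by_cases hja : j = a
        · subst hja
          refine ⟨?_, ?_, ?_⟩ <;> simp [hba, hbF]
        · by_cases hjb : j = b
          · subst hjb
            refine ⟨?_, ?_, ?_⟩ <;> simp [hja, ha, hba, Ne.symm hja]
          · have hjF' : j ∈ F' := by
              rw [hF']; exact Finset.mem_erase.2 ⟨hjb, Finset.mem_erase.2 ⟨hja, hj⟩⟩
            obtain ⟨h1, h2, h3⟩ := hr'2 j hjF'
            have h1a : r' j ≠ a := fun h => haF' (h ▸ h1)
            have h1b : r' j ≠ b := fun h => hbF' (h ▸ h1)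
            simp only [if_neg hja, if_neg hjb, if_neg h1a, if_neg h1b]
            exact ⟨Finset.mem_of_mem_erase (Finset.mem_of_mem_erase h1), h2, h3⟩

/-- The set of non-fixed points of an involution has even cardinality. -/
theorem even_card_nonfixed [Fintype α] (g : α → α) (hg : ∀ j, g (g j) = j) :
    Even (Finset.univ.filter (fun j => g j ≠ j)).card := by
  classical
  set P := Finset.univ.filter (fun j => g j ≠ j) with hP
  have key : ∀ (S : Finset α), S ⊆ P → (∀ j ∈ S, g j ∈ S) → Even S.card := by
    intro S
    induction S using Finset.strongInduction with
    | _ S ih =>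
      intro hSP hSg
      rcases S.eq_empty_or_nonempty with rfl | ⟨a, ha⟩
      · simp
      · have hga : g a ∈ S := hSg a ha
        have hgane : g a ≠ a := by
          have := hSP ha; rw [hP, Finset.mem_filter] at this; exact this.2
        set S' := (S.erase a).erase (g a) with hS'
        have hsub : S' ⊂ S :=
          Finset.ssubset_of_subset_of_ssubset
            ((Finset.erase_subset _ _)) (Finset.erase_ssubset ha)
        have hgaS : g a ∈ S.erase a := Finset.mem_erase.2 ⟨hgane, hga⟩
        have hcard : S'.card = S.card - 2 := by
          rw [hS', Finset.card_erase_of_mem hgaS, Finset.card_erase_of_mem ha]; omega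
        have hev : Even S'.card := by
          apply ih S' hsub
          · exact fun j hj => hSP (Finset.mem_of_mem_erase (Finset.mem_of_mem_erase hj))
          · intro j hj
            have hjS : j ∈ S := Finset.mem_of_mem_erase (Finset.mem_of_mem_erase hj)
            have hjga : j ≠ g a := Finset.ne_of_mem_erase hj
            have hja : j ≠ a := Finset.ne_of_mem_erase (Finset.mem_of_mem_erase hj)
            refine Finset.mem_erase.2 ⟨?_, Finset.mem_erase.2 ⟨?_, hSg j hjS⟩⟩
            · intro h
              apply hja
              have : g (g j) = g (g a) := by rw [h]
              rwa [hg, hg] at this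
            · intro h
              apply hjga
              have : g (g j) = g a := by rw [h]
              rwa [hg] at this
        have h2 : 2 ≤ S.card :=
          Finset.one_lt_card.2 ⟨a, ha, g a, hga, fun h => hgane h.symm⟩
        rcases hev with ⟨k, hk⟩
        exact ⟨k + 1, by omega⟩
  apply key P (le_refl _)
  intro j hj
  rw [hP, Finset.mem_filter] at hj ⊢
  refine ⟨Finset.mem_univ _, ?_⟩
  rw [hg]; exact fun h => hj.2 h.symm

end Pairing


open scoped Classical

namespace TTPaux

variable {n : ℕ}

/-- `d` is an away day for team `i`. -/
def aw (s : TTP2Schedule n) (i : Fin n) (d : ℕ) : Prop :=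
  d < 2 * (n - 1) ∧ s.home d i = false

/-- block start: day `d` is not preceded by an away day. -/
def bs (s : TTP2Schedule n) (i : Fin n) (d : ℕ) : Prop :=
  ∀ e, d = e + 1 → ¬ aw s i e

/-- the unique day on which `i` plays away at `j`. -/
noncomputable def day (s : TTP2Schedule n) (i j : Fin n) : ℕ :=
  if h : i ≠ j then (s.plays_once i j h).choose else 0

/-- the venue of team i on day d (i for d out of range). -/
noncomputable def V (s : TTP2Schedule n) (i : Fin n) (d : ℕ) : Fin n :=
  if aw s i d then s.opp d i else i

/-- the "extra" cost attributed to day `d`. -/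
noncomputable def E (D : Fin n → Fin n → ℝ) (s : TTP2Schedule n) (i : Fin n) (d : ℕ) : ℝ :=
  if aw s i d ∧ bs s i d then
    (if aw s i (d + 1) then D (s.opp d i) (s.opp (d + 1) i) else D i (s.opp d i))
  else 0

variable {s : TTP2Schedule n} {i : Fin n}

theorem day_spec {j : Fin n} (h : j ≠ i) :
    aw s i (day s i j) ∧ s.opp (day s i j) i = j := by
  have h' : i ≠ j := Ne.symm h
  rw [day, dif_pos h']
  obtain ⟨⟨h1, h2, h3⟩, _⟩ := (s.plays_once i j h').choose_spec
  exact ⟨⟨h1, h3⟩, h2⟩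

theorem day_opp {d : ℕ} (h : aw s i d) : day s i (s.opp d i) = d := by
  have hne : s.opp d i ≠ i := s.opp_ne d h.1 i
  have h' : i ≠ s.opp d i := Ne.symm hne
  rw [day, dif_pos h']
  obtain ⟨_, huniq⟩ := (s.plays_once i (s.opp d i) h').choose_spec
  exact (huniq d ⟨h.1, rfl, h.2⟩).symm

theorem opp_ne_i {d : ℕ} (h : aw s i d) : s.opp d i ≠ i := s.opp_ne d h.1 i

theorem no3 {d : ℕ} (h0 : aw s i d) (h1 : aw s i (d + 1)) : ¬ aw s i (d + 2) := by
  intro h2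
  exact s.bounded_by_two d h2.1 i ⟨by rw [h0.2, h1.2], by rw [h1.2, h2.2]⟩

theorem opp_succ_ne {d : ℕ} (h1 : aw s i (d + 1)) : s.opp (d + 1) i ≠ s.opp d i :=
  s.no_repeat d h1.1 i

end TTPaux

namespace TTPaux

variable {n : ℕ} {s : TTP2Schedule n} {i : Fin n} {D : Fin n → Fin n → ℝ}

/-- reindexing: sum over away days = sum over opponents. -/
theorem sum_away (f : Fin n → ℝ) :
    ∑ d ∈ (Finset.range (2 * (n - 1))).filter (aw s i), f (s.opp d i)
      = ∑ j ∈ Finset.univ.erase i, f j := by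
  apply Finset.sum_nbij' (i := fun d => s.opp d i) (j := fun j => day s i j)
  · intro d hd
    rw [Finset.mem_filter] at hd
    exact Finset.mem_erase.2 ⟨opp_ne_i hd.2, Finset.mem_univ _⟩
  · intro j hj
    have hji : j ≠ i := (Finset.mem_erase.1 hj).1
    have := day_spec (s := s) hji
    exact Finset.mem_filter.2 ⟨Finset.mem_range.2 this.1.1, this.1⟩
  · intro d hd
    rw [Finset.mem_filter] at hd
    exact day_opp hd.2
  · intro j hj
    exact (day_spec (s := s) (Finset.mem_erase.1 hj).1).2
  · intro d hd; rfl

theorem bs_zero : bs s i 0 := fun e he => absurd he (by omega)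

theorem bs_succ (d : ℕ) : bs s i (d + 1) ↔ ¬ aw s i d := by
  constructor
  · intro h; exact h d rfl
  · intro h e he
    have : e = d := by omega
    rwa [this]

theorem not_bs {d : ℕ} (h : ¬ bs s i d) : ∃ e, d = e + 1 ∧ aw s i e := by
  rw [bs] at h; push_neg at h
  obtain ⟨e, he1, he2⟩ := h
  exact ⟨e, he1, he2⟩

/-- The key identity: travel = Σ_j D i j + Σ_d E d. -/
theorem travel_eq (hD : IsDistMatrix D) (hK : 0 < 2 * (n - 1)) :
    s.travel D i = (∑ j, D i j) + ∑ d ∈ Finset.range (2 * (n - 1)), E D s i d := by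
  obtain ⟨hzero, hsymm, hnonneg, htri⟩ := hD
  set K := 2 * (n - 1) with hKdef
  have hV : ∀ d, d < K → s.venue d i = V s i d := by
    intro d hd
    rw [TTP2Schedule.venue, V, aw]
    cases h : s.home d i <;> simp [h, hd] <;> exact fun h' => absurd h' (by omega)
  have hVK : V s i K = i := by rw [V, if_neg]; intro h; exact absurd h.1 (lt_irrefl K)
  -- Claim 1
  have claim1 : s.travel D i
      = D i (V s i 0) + ∑ d ∈ Finset.range K, D (V s i d) (V s i (d + 1)) := by
    rw [TTP2Schedule.travel]
    have hK1 : K - 1 + 1 = K := Nat.succ_pred_eq_of_pos hK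
    rw [← hK1, Finset.sum_range_succ, hK1]
    rw [hV 0 hK, hV (K - 1) (by omega)]
    have hsc : ∑ d ∈ Finset.range (K - 1), D (s.venue d i) (s.venue (d + 1) i)
        = ∑ d ∈ Finset.range (K - 1), D (V s i d) (V s i (d + 1)) := by
      apply Finset.sum_congr rfl
      intro d hd
      rw [Finset.mem_range] at hd
      rw [hV d (by omega), hV (d + 1) (by omega)]
    rw [hsc, hVK]
    ring
  -- Claim 2 : pointwise splitting of transitions
  have claim2 : ∀ d, D (V s i d) (V s i (d + 1)) =
      (if aw s i d then D (s.opp d i) (V s i (d + 1)) else 0)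
        + (if ¬ aw s i d ∧ aw s i (d + 1) then D i (s.opp (d + 1) i) else 0) := by
    intro d
    by_cases h : aw s i d
    · rw [if_pos h, if_neg (by tauto), V, if_pos h]; ring
    · rw [if_neg h, V, if_neg h]
      by_cases h1 : aw s i (d + 1)
      · rw [if_pos ⟨h, h1⟩, V, if_pos h1]; ring
      · rw [if_neg (by tauto), V, if_neg h1, hzero]; ring
  -- Claim 3 : shifting the incoming costs
  have claim3 : D i (V s i 0)
        + ∑ d ∈ Finset.range K, (if ¬ aw s i d ∧ aw s i (d + 1) then D i (s.opp (d + 1) i) else 0)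
      = ∑ d ∈ Finset.range K, (if aw s i d ∧ bs s i d then D i (s.opp d i) else 0) := by
    have hK1 : K - 1 + 1 = K := Nat.succ_pred_eq_of_pos hK
    conv_rhs => rw [← hK1, Finset.sum_range_succ' (fun d => if aw s i d ∧ bs s i d then D i (s.opp d i) else 0) (K - 1)]
    have h0 : (if aw s i 0 ∧ bs s i 0 then D i (s.opp 0 i) else 0) = D i (V s i 0) := by
      by_cases h : aw s i 0
      · rw [if_pos ⟨h, bs_zero⟩, V, if_pos h]
      · rw [if_neg (by tauto), V, if_neg h, hzero]
    have hlast : (if ¬ aw s i (K - 1) ∧ aw s i (K - 1 + 1) then D i (s.opp (K - 1 + 1) i) else 0) = 0 := by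
      rw [if_neg]
      intro h
      rw [hK1] at h
      exact absurd h.2.1 (lt_irrefl K)
    conv_lhs => rw [← hK1, Finset.sum_range_succ, hlast, add_zero]
    rw [h0, add_comm]
    congr 1
    apply Finset.sum_congr rfl
    intro d _
    congr 1
    rw [bs_succ]
    exact propext and_comm
  -- Claim 4 : pointwise identification with E
  have claim4 : ∀ d, (if aw s i d ∧ bs s i d then D i (s.opp d i) else 0)
        + (if aw s i d then D (s.opp d i) (V s i (d + 1)) else 0)
      = (if aw s i d then D i (s.opp d i) else 0) + E D s i d := by
    intro d
    by_cases h : aw s i d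
    · by_cases hb : bs s i d
      · by_cases h1 : aw s i (d + 1)
        · rw [if_pos ⟨h, hb⟩, if_pos h, if_pos h, E, if_pos ⟨h, hb⟩, if_pos h1, V, if_pos h1]
        · rw [if_pos ⟨h, hb⟩, if_pos h, if_pos h, E, if_pos ⟨h, hb⟩, if_neg h1, V, if_neg h1,
            hsymm (s.opp d i) i]
      · obtain ⟨e, hed, hawe⟩ := not_bs hb
        have h1 : ¬ aw s i (d + 1) := by
          subst hed
          exact no3 hawe h
        rw [if_neg (by tauto), if_pos h, if_pos h, E, if_neg (by tauto), V, if_neg h1,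
          hsymm (s.opp d i) i]
        ring
    · rw [if_neg (by tauto), if_neg h, if_neg h, E, if_neg (by tauto)]
  -- combine
  rw [claim1, Finset.sum_congr rfl (fun d _ => claim2 d), Finset.sum_add_distrib]
  rw [show ∀ (a b c : ℝ), a + (b + c) = (a + c) + b from fun a b c => by ring]
  rw [claim3, ← Finset.sum_add_distrib]
  rw [Finset.sum_congr rfl (fun d _ => claim4 d), Finset.sum_add_distrib]
  congr 1
  rw [← Finset.sum_filter]
  rw [sum_away (f := fun j => D i j)]
  rw [Finset.sum_erase _ (by rw [hzero])]

end TTPaux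

namespace TTPaux

variable {n : ℕ} {s : TTP2Schedule n} {i : Fin n} {D : Fin n → Fin n → ℝ}

/-- the partner of team `j` in team `i`'s trip containing `j` (itself if singleton). -/
noncomputable def mate (s : TTP2Schedule n) (i : Fin n) (j : Fin n) : Fin n :=
  if j = i then i else
    if aw s i (day s i j + 1) then s.opp (day s i j + 1) i
    else if ∃ e, day s i j = e + 1 ∧ aw s i e then s.opp (day s i j - 1) i
    else j

theorem mate_i : mate s i i = i := if_pos rfl

theorem mate_pairfirst {d : ℕ} (hd : aw s i d) (h1 : aw s i (d + 1)) :
    mate s i (s.opp d i) = s.opp (d + 1) i := by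
  rw [mate, if_neg (opp_ne_i hd), day_opp hd, if_pos h1]

theorem mate_pairsecond {d : ℕ} (h0 : aw s i d) (hd : aw s i (d + 1)) :
    mate s i (s.opp (d + 1) i) = s.opp d i := by
  rw [mate, if_neg (opp_ne_i hd), day_opp hd, if_neg (no3 h0 hd), if_pos ⟨d, rfl, h0⟩]
  norm_num

theorem mate_single {d : ℕ} (hd : aw s i d) (h1 : ¬ aw s i (d + 1)) (hb : bs s i d) :
    mate s i (s.opp d i) = s.opp d i := by
  rw [mate, if_neg (opp_ne_i hd), day_opp hd, if_neg h1, if_neg]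
  rintro ⟨e, he, hawe⟩
  exact hb e he hawe

theorem mate_invol (j : Fin n) : mate s i (mate s i j) = j := by
  by_cases hj : j = i
  · rw [hj, mate_i, mate_i]
  · have hd : aw s i (day s i j) ∧ s.opp (day s i j) i = j := day_spec hj
    set d := day s i j with hddef
    by_cases h1 : aw s i (d + 1)
    · have : mate s i j = s.opp (d + 1) i := by
        conv_lhs => rw [← hd.2]
        exact mate_pairfirst hd.1 h1
      rw [this, mate_pairsecond hd.1 h1, hd.2]
    · by_cases hb : bs s i d
      · have : mate s i j = j := by
          conv_lhs => rw [← hd.2]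
          rw [mate_single hd.1 h1 hb, hd.2]
        rw [this, this]
      · obtain ⟨e, hde, hawe⟩ := not_bs hb
        have hawd : aw s i (e + 1) := hde ▸ hd.1
        have : mate s i j = s.opp e i := by
          conv_lhs => rw [← hd.2, hde]
          exact mate_pairsecond hawe hawd
        rw [this, mate_pairfirst hawe hawd, ← hde, hd.2]

theorem mate_ne_iff {j : Fin n} (hj : j ≠ i) (hfix : mate s i j = j) :
    ¬ aw s i (day s i j + 1) ∧ bs s i (day s i j) := by
  have hd : aw s i (day s i j) ∧ s.opp (day s i j) i = j := day_spec hj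
  set d := day s i j with hddef
  constructor
  · intro h1
    have : mate s i j = s.opp (d + 1) i := by
      conv_lhs => rw [← hd.2]
      exact mate_pairfirst hd.1 h1
    rw [hfix] at this
    exact opp_succ_ne h1 (by rw [← this, hd.2])
  · by_contra hb
    obtain ⟨e, hde, hawe⟩ := not_bs hb
    have hawd : aw s i (e + 1) := hde ▸ hd.1
    have : mate s i j = s.opp e i := by
      conv_lhs => rw [← hd.2, hde]
      exact mate_pairsecond hawe hawd
    rw [hfix] at this
    exact opp_succ_ne hawd (by rw [← this, ← hde, hd.2])

theorem mate_eq_i {j : Fin n} (h : mate s i j = i) : j = i := by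
  by_contra hj
  have hd : aw s i (day s i j) ∧ s.opp (day s i j) i = j := day_spec hj
  set d := day s i j with hddef
  by_cases h1 : aw s i (d + 1)
  · have : mate s i j = s.opp (d + 1) i := by
      conv_lhs => rw [← hd.2]; exact mate_pairfirst hd.1 h1
    rw [h] at this
    exact opp_ne_i h1 this.symm
  · by_cases hb : bs s i d
    · have : mate s i j = j := by
        conv_lhs => rw [← hd.2]; rw [mate_single hd.1 h1 hb, hd.2]
      rw [h] at this; exact hj this.symm
    · obtain ⟨e, hde, hawe⟩ := not_bs hb
      have hawd : aw s i (e + 1) := hde ▸ hd.1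
      have : mate s i j = s.opp e i := by
        conv_lhs => rw [← hd.2, hde]; exact mate_pairsecond hawe hawd
      rw [h] at this
      exact opp_ne_i hawe this.symm

end TTPaux

namespace TTPaux

variable {n : ℕ} {s : TTP2Schedule n} {i : Fin n} {D : Fin n → Fin n → ℝ}

theorem matching_bound (hD : IsDistMatrix D) (hn : Even n) :
    ∃ p : Fin n → Fin n, IsPM p ∧
      pmWeight D p ≤ ∑ d ∈ Finset.range (2 * (n - 1)), E D s i d := by
  obtain ⟨hzero, hsymm, hnonneg, htri⟩ := hD
  set K := 2 * (n - 1) with hKdef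
  set Fs : Finset (Fin n) := Finset.univ.filter (fun j => mate s i j = j) with hFs
  -- Fs has even cardinality
  have hevenFs : Even Fs.card := by
    have h1 : Even (Finset.univ.filter (fun j => mate s i j ≠ j)).card :=
      even_card_nonfixed (mate s i) mate_invol
    have h2 : Fs.card + (Finset.univ.filter (fun j => mate s i j ≠ j)).card
        = Fintype.card (Fin n) := by
      rw [hFs]
      rw [Finset.card_filter_add_card_filter_not]
      exact Finset.card_univ
    rw [Fintype.card_fin] at h2
    have : Fs.card = n - (Finset.univ.filter (fun j => mate s i j ≠ j)).card := by omega
    rw [this]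
    exact Even.tsub hn h1
  obtain ⟨r, hr1, hr2⟩ := exists_fpf_invol Fs hevenFs
  have hiFs : i ∈ Fs := Finset.mem_filter.2 ⟨Finset.mem_univ _, mate_i⟩
  -- the matching
  set p : Fin n → Fin n := fun j => if mate s i j = j then r j else mate s i j with hp
  have hmem_fix : ∀ j, mate s i j = j → j ∈ Fs :=
    fun j h => Finset.mem_filter.2 ⟨Finset.mem_univ _, h⟩
  have hPM : IsPM p := by
    constructor
    · intro j
      by_cases hm : mate s i j = j
      · obtain ⟨h1, h2, h3⟩ := hr2 j (hmem_fix j hm)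
        have hrj : mate s i (r j) = r j := (Finset.mem_filter.1 h1).2
        rw [hp]
        simp only [if_pos hm, if_pos hrj]
        exact h3
      · have hmm : mate s i (mate s i j) = j := mate_invol j
        have hne : ¬ (mate s i (mate s i j) = mate s i j) := by
          rw [hmm]; exact fun h => hm h.symm
        rw [hp]
        simp only [if_neg hm, if_neg hne]
        exact hmm
    · intro j
      by_cases hm : mate s i j = j
      · obtain ⟨h1, h2, h3⟩ := hr2 j (hmem_fix j hm)
        rw [hp]; simp only [if_pos hm]; exact h2
      · rw [hp]; simp only [if_neg hm]; exact hm
  refine ⟨p, hPM, ?_⟩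
  -- notation for away-day sets
  set AD := (Finset.range K).filter (aw s i) with hAD
  set A1 := AD.filter (fun d => aw s i (d + 1) ∧ bs s i d) with hA1
  set A2 := AD.filter (fun d => ¬ bs s i d) with hA2
  set A0 := AD.filter (fun d => ¬ aw s i (d + 1) ∧ bs s i d) with hA0
  have hawAD : ∀ d ∈ AD, aw s i d := fun d hd => (Finset.mem_filter.1 hd).2
  -- splitting an arbitrary sum over AD
  have hsplit : ∀ g : ℕ → ℝ, ∑ d ∈ AD, g d = ∑ d ∈ A1, g d + ∑ d ∈ A2, g d + ∑ d ∈ A0, g d := by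
    intro g
    have h1 : ∑ d ∈ A1, g d = ∑ d ∈ AD, if aw s i (d + 1) ∧ bs s i d then g d else 0 :=
      Finset.sum_filter _ _
    have h2 : ∑ d ∈ A2, g d = ∑ d ∈ AD, if ¬ bs s i d then g d else 0 :=
      Finset.sum_filter _ _
    have h0 : ∑ d ∈ A0, g d = ∑ d ∈ AD, if ¬ aw s i (d + 1) ∧ bs s i d then g d else 0 :=
      Finset.sum_filter _ _
    rw [h1, h2, h0, ← Finset.sum_add_distrib, ← Finset.sum_add_distrib]
    apply Finset.sum_congr rfl
    intro d _
    by_cases hb : bs s i d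
    · by_cases h1 : aw s i (d + 1)
      · rw [if_pos ⟨h1, hb⟩, if_neg (fun h => h hb), if_neg (fun h => h.1 h1)]; ring
      · rw [if_neg (fun h => h1 h.1), if_neg (fun h => h hb), if_pos ⟨h1, hb⟩]; ring
    · rw [if_neg (fun h => hb h.2), if_pos hb, if_neg (fun h => hb h.2)]; ring
  -- values of p on the three parts
  have hval1 : ∀ d ∈ A1, D (s.opp d i) (p (s.opp d i)) = E D s i d := by
    intro d hd
    rw [hA1, Finset.mem_filter] at hd
    obtain ⟨hdAD, h1, hb⟩ := hd
    have haw : aw s i d := hawAD d hdAD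
    have hm : mate s i (s.opp d i) = s.opp (d + 1) i := mate_pairfirst haw h1
    have hne : mate s i (s.opp d i) ≠ s.opp d i := by rw [hm]; exact opp_succ_ne h1
    rw [hp]; simp only [if_neg hne]
    rw [hm, E, if_pos ⟨haw, hb⟩, if_pos h1]
  have hval2 : ∑ d ∈ A2, D (s.opp d i) (p (s.opp d i)) = ∑ d ∈ A1, E D s i d := by
    symm
    apply Finset.sum_nbij' (i := fun d => d + 1) (j := fun d => d - 1)
    · intro e he
      rw [hA1, Finset.mem_filter] at he
      obtain ⟨heAD, h1, hb⟩ := he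
      rw [hA2, Finset.mem_filter]
      refine ⟨Finset.mem_filter.2 ⟨Finset.mem_range.2 h1.1, h1⟩, ?_⟩
      rw [bs_succ]
      exact fun h => h (hawAD e heAD)
    · intro d hd
      rw [hA2, Finset.mem_filter] at hd
      obtain ⟨hdAD, hnb⟩ := hd
      obtain ⟨e, hde, hawe⟩ := not_bs hnb
      have hawd : aw s i d := hawAD d hdAD
      subst hde
      simp only [Nat.add_sub_cancel]
      rw [hA1, Finset.mem_filter]
      refine ⟨Finset.mem_filter.2 ⟨Finset.mem_range.2 hawe.1, hawe⟩, hawd, ?_⟩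
      by_contra hbe
      obtain ⟨e', hde', hawe'⟩ := not_bs hbe
      exact no3 hawe' (hde' ▸ hawe) (by rw [hde'] at hawd; exact hawd)
    · intro e _; simp
    · intro d hd
      rw [hA2, Finset.mem_filter] at hd
      obtain ⟨e, hde, _⟩ := not_bs hd.2
      omega
    · intro e he
      rw [hA1, Finset.mem_filter] at he
      obtain ⟨heAD, h1, hb⟩ := he
      have hawe : aw s i e := hawAD e heAD
      have hm : mate s i (s.opp (e + 1) i) = s.opp e i := mate_pairsecond hawe h1
      have hne : mate s i (s.opp (e + 1) i) ≠ s.opp (e + 1) i := by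
        rw [hm]; exact fun h => opp_succ_ne h1 h.symm
      rw [E, if_pos ⟨hawe, hb⟩, if_pos h1, hp]
      simp only [if_neg hne]
      rw [hm, hsymm]
  have hval0 : ∀ d ∈ A0, p (s.opp d i) = r (s.opp d i) := by
    intro d hd
    rw [hA0, Finset.mem_filter] at hd
    obtain ⟨hdAD, h1, hb⟩ := hd
    have hm : mate s i (s.opp d i) = s.opp d i := mate_single (hawAD d hdAD) h1 hb
    rw [hp]; simp only [if_pos hm]
  -- the bijection between A0 and Fs.erase i
  have hbij : ∀ f : Fin n → ℝ, ∑ d ∈ A0, f (s.opp d i) = ∑ j ∈ Fs.erase i, f j := by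
    intro f
    apply Finset.sum_nbij' (i := fun d => s.opp d i) (j := fun j => day s i j)
    · intro d hd
      rw [hA0, Finset.mem_filter] at hd
      obtain ⟨hdAD, h1, hb⟩ := hd
      have haw := hawAD d hdAD
      refine Finset.mem_erase.2 ⟨opp_ne_i haw, Finset.mem_filter.2 ⟨Finset.mem_univ _, ?_⟩⟩
      exact mate_single haw h1 hb
    · intro j hj
      rw [Finset.mem_erase] at hj
      obtain ⟨hji, hjFs⟩ := hj
      have hfix : mate s i j = j := (Finset.mem_filter.1 hjFs).2
      obtain ⟨h1, hb⟩ := mate_ne_iff hji hfix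
      have hd := day_spec (s := s) hji
      rw [hA0, Finset.mem_filter]
      exact ⟨Finset.mem_filter.2 ⟨Finset.mem_range.2 hd.1.1, hd.1⟩, h1, hb⟩
    · intro d hd
      rw [hA0, Finset.mem_filter] at hd
      exact day_opp (hawAD d hd.1)
    · intro j hj
      exact (day_spec (s := s) (Finset.mem_erase.1 hj).1).2
    · intro d _; rfl
  -- sum over Fs of matched distances
  have hFsbound : ∑ j ∈ Fs, D j (r j) ≤ 2 * ∑ d ∈ A0, E D s i d := by
    have step1 : ∑ j ∈ Fs, D j (r j) ≤ ∑ j ∈ Fs, (D j i + D i (r j)) :=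
      Finset.sum_le_sum (fun j _ => htri j (r j) i)
    have step2 : ∑ j ∈ Fs, D i (r j) = ∑ j ∈ Fs, D i j := by
      apply Finset.sum_nbij' (i := fun j => r j) (j := fun j => r j)
      · exact fun j hj => (hr2 j hj).1
      · exact fun j hj => (hr2 j hj).1
      · exact fun j hj => (hr2 j hj).2.2
      · exact fun j hj => (hr2 j hj).2.2
      · intro j hj; rfl
    have step3 : ∑ j ∈ Fs, D j i = ∑ j ∈ Fs, D i j :=
      Finset.sum_congr rfl (fun j _ => hsymm j i)
    have step4 : ∑ j ∈ Fs, D i j = ∑ d ∈ A0, E D s i d := by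
      have : ∑ j ∈ Fs, D i j = D i i + ∑ j ∈ Fs.erase i, D i j :=
        (Finset.add_sum_erase Fs (fun j => D i j) hiFs).symm
      rw [this, hzero, zero_add, ← hbij (fun j => D i j)]
      apply Finset.sum_congr rfl
      intro d hd
      rw [hA0, Finset.mem_filter] at hd
      obtain ⟨hdAD, h1, hb⟩ := hd
      rw [E, if_pos ⟨hawAD d hdAD, hb⟩, if_neg h1]
    calc ∑ j ∈ Fs, D j (r j) ≤ ∑ j ∈ Fs, (D j i + D i (r j)) := step1
      _ = ∑ j ∈ Fs, D j i + ∑ j ∈ Fs, D i (r j) := Finset.sum_add_distrib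
      _ = ∑ j ∈ Fs, D i j + ∑ j ∈ Fs, D i j := by rw [step2, step3]
      _ = 2 * ∑ d ∈ A0, E D s i d := by rw [step4]; ring
  -- E vanishes on A2
  have hE2 : ∑ d ∈ A2, E D s i d = 0 := by
    apply Finset.sum_eq_zero
    intro d hd
    rw [hA2, Finset.mem_filter] at hd
    rw [E, if_neg (fun h => hd.2 h.2)]
  -- E vanishes outside AD
  have hEAD : ∑ d ∈ Finset.range K, E D s i d = ∑ d ∈ AD, E D s i d := by
    rw [hAD, Finset.sum_filter_of_ne]
    intro d _ hne
    rw [E] at hne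
    by_contra haw
    exact hne (if_neg (fun h => haw h.1))
  -- putting it all together
  have hmain : ∑ j, D j (p j) ≤ 2 * ∑ d ∈ Finset.range K, E D s i d := by
    have hdecomp : ∑ j, D j (p j) = D i (p i) + ∑ j ∈ Finset.univ.erase i, D j (p j) :=
      (Finset.add_sum_erase Finset.univ (fun j => D j (p j)) (Finset.mem_univ i)).symm
    have hre : ∑ j ∈ Finset.univ.erase i, D j (p j) = ∑ d ∈ AD, D (s.opp d i) (p (s.opp d i)) :=
      (sum_away (fun j => D j (p j))).symm
    have hpi : p i = r i := by rw [hp]; simp only [if_pos mate_i]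
    rw [hdecomp, hre, hsplit (fun d => D (s.opp d i) (p (s.opp d i)))]
    rw [Finset.sum_congr rfl hval1, hval2]
    have hA0sum : ∑ d ∈ A0, D (s.opp d i) (p (s.opp d i)) = ∑ d ∈ A0, D (s.opp d i) (r (s.opp d i)) :=
      Finset.sum_congr rfl (fun d hd => by rw [hval0 d hd])
    rw [hA0sum]
    have hFseq : D i (r i) + ∑ d ∈ A0, D (s.opp d i) (r (s.opp d i)) = ∑ j ∈ Fs, D j (r j) := by
      rw [hbij (fun j => D j (r j))]
      exact Finset.add_sum_erase Fs (fun j => D j (r j)) hiFs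
    rw [hEAD, hsplit (E D s i), hE2, hpi]
    have := hFsbound
    linarith [hFseq]
  rw [pmWeight]
  linarith [hmain]

end TTPaux

/-- In any feasible TTP-2 schedule, the travel distance of each
team `i` is at least `LB_i = D_i + D_M`, where `D_i = Σ_j D i j` and `D_M` is the
minimum weight of a perfect matching of the complete graph on the teams. -/
theorem ttp2_travel_lower_bound (n : ℕ) (hn : Even n)
    (D : Fin n → Fin n → ℝ) (hD : IsDistMatrix D)
    (M : Fin n → Fin n) (hM : IsPM M)
    (hMmin : ∀ p : Fin n → Fin n, IsPM p → pmWeight D M ≤ pmWeight D p)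
    (s : TTP2Schedule n) (i : Fin n) :
    (∑ j, D i j) + pmWeight D M ≤ s.travel D i := by
  have hn0 : 0 < n := i.pos
  have hn2 : 2 ≤ n := by rcases hn with ⟨k, hk⟩; omega
  have hK : 0 < 2 * (n - 1) := by omega
  obtain ⟨p, hPM, hle⟩ := TTPaux.matching_bound (s := s) (i := i) hD hn
  have htr := TTPaux.travel_eq (s := s) (i := i) (D := D) hD hK
  have hM := hMmin p hPM
  linarith [htr, hle, hM]
end

section
/- Any feasible TTP-2 schedule on n teams with distance matrix D (symmetric, nonnegative, zero diagonal, triangle inequality) has total traveling distance at least 2·D_G + n·D_M, where D_G is the sum of D over all unordered pairs of teams and D_M is the minimum weight of a perfect matching of the complete graph on the n teams with edge weights D (the independent lower bound). -/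
open Finset

lemma pair_up {n : ℕ} (D : Fin n → Fin n → ℝ) (hsymm : ∀ i j, D i j = D j i)
    (htri : ∀ i j k, D i j ≤ D i k + D k j) (F : Finset (Fin n)) :
    Even F.card → ∀ i ∈ F,
      ∃ σ : Fin n → Fin n, (∀ k ∈ F, σ k ∈ F) ∧ (∀ k, σ (σ k) = k) ∧
        (∀ k ∈ F, σ k ≠ k) ∧ (∀ k, k ∉ F → σ k = k) ∧
        ∑ k ∈ F, D k (σ k) ≤ 2 * ∑ k ∈ F.erase i, D i k := by
  induction F using Finset.strongInduction with
  | _ F ih =>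
    intro hev i hi
    have hpos : 0 < F.card := card_pos.mpr ⟨i, hi⟩
    have h2 : 2 ≤ F.card := by obtain ⟨c, hc⟩ := hev; omega
    obtain ⟨j, hj⟩ : (F.erase i).Nonempty := by
      rw [← card_pos, card_erase_of_mem hi]; omega
    have hji : j ≠ i := (mem_erase.mp hj).1
    have hjF : j ∈ F := (mem_erase.mp hj).2
    by_cases hc2 : F.card = 2
    · have hcardE : (F.erase i).card = 1 := by rw [card_erase_of_mem hi, hc2]
      obtain ⟨a, ha⟩ := card_eq_one.mp hcardE
      have hja : j = a := by rw [ha] at hj; exact mem_singleton.mp hj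
      subst hja
      have hF : F = insert i {j} := by rw [← ha, insert_erase hi]
      refine ⟨Equiv.swap i j, ?_, ?_, ?_, ?_, ?_⟩
      · intro x hx
        rw [hF] at hx ⊢
        rcases mem_insert.mp hx with rfl | hx
        · rw [Equiv.swap_apply_left]; exact mem_insert_of_mem (mem_singleton_self _)
        · rw [mem_singleton.mp hx, Equiv.swap_apply_right]; exact mem_insert_self _ _
      · intro k; exact Equiv.swap_apply_self _ _ _
      · intro x hx
        rw [hF] at hx
        rcases mem_insert.mp hx with rfl | hx
        · rw [Equiv.swap_apply_left]; exact hji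
        · rw [mem_singleton.mp hx, Equiv.swap_apply_right]; exact Ne.symm hji
      · intro x hx
        rw [hF] at hx
        exact Equiv.swap_apply_of_ne_of_ne (fun h => hx (h ▸ mem_insert_self _ _))
          (fun h => hx (h ▸ mem_insert_of_mem (mem_singleton_self _)))
      · have hEe : ({i, j} : Finset (Fin n)).erase i = {j} := by rw [← hF]; exact ha
        rw [hF, hEe]
        have hij : i ≠ j := fun h => hji h.symm
        rw [Finset.sum_insert (by simpa using hij), Finset.sum_singleton,
          Finset.sum_singleton, Equiv.swap_apply_left, Equiv.swap_apply_right,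
          hsymm j i]
        linarith
    · have h4 : 4 ≤ F.card := by obtain ⟨c, hc⟩ := hev; omega
      obtain ⟨k, hk⟩ : ((F.erase i).erase j).Nonempty := by
        rw [← card_pos, card_erase_of_mem hj, card_erase_of_mem hi]; omega
      have hkj : k ≠ j := (mem_erase.mp hk).1
      have hkEi := (mem_erase.mp hk).2
      have hki : k ≠ i := (mem_erase.mp hkEi).1
      have hkF : k ∈ F := (mem_erase.mp hkEi).2
      have hkFj : k ∈ F.erase j := mem_erase.mpr ⟨hkj, hkF⟩
      set F' := (F.erase j).erase k with hF'
      have hjF' : j ∉ F' := fun h => (mem_erase.mp (mem_erase.mp h).2).1 rfl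
      have hkF' : k ∉ F' := fun h => (mem_erase.mp h).1 rfl
      have hiF' : i ∈ F' := mem_erase.mpr ⟨Ne.symm hki, mem_erase.mpr ⟨Ne.symm hji, hi⟩⟩
      have hss : F' ⊂ F :=
        lt_of_le_of_lt (erase_subset _ _) (erase_ssubset hjF)
      have hcF' : F'.card = F.card - 2 := by
        rw [hF', card_erase_of_mem hkFj, card_erase_of_mem hjF]; omega
      have hevF' : Even F'.card := by
        rw [Nat.even_iff] at hev ⊢; omega
      obtain ⟨σ', hm', hinv', hne', hid', hsum'⟩ := ih F' hss hevF' i hiF'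
      have hσ'j : σ' j = j := hid' j hjF'
      have hσ'k : σ' k = k := hid' k hkF'
      set σ : Fin n → Fin n := fun x => if x = j then k else if x = k then j else σ' x with hσ
      have hσj : σ j = k := by simp [hσ]
      have hσk : σ k = j := by simp [hσ, hkj]
      have hσo : ∀ x, x ≠ j → x ≠ k → σ x = σ' x := by
        intro x h1 h2; simp [hσ, h1, h2]
      have hF'sub : F' ⊆ F := hss.subset
      have hmemF' : ∀ x, x ∈ F → x ≠ j → x ≠ k → x ∈ F' := fun x hx h1 h2 =>
        mem_erase.mpr ⟨h2, mem_erase.mpr ⟨h1, hx⟩⟩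
      have hσ'njk : ∀ x, x ≠ j → x ≠ k → σ' x ≠ j ∧ σ' x ≠ k := by
        intro x h1 h2
        by_cases hx : x ∈ F'
        · have := hm' x hx
          exact ⟨fun h => hjF' (h ▸ this), fun h => hkF' (h ▸ this)⟩
        · rw [hid' x hx]; exact ⟨h1, h2⟩
      refine ⟨σ, ?_, ?_, ?_, ?_, ?_⟩
      · intro x hx
        by_cases h1 : x = j
        · rw [h1, hσj]; exact hkF
        by_cases h2 : x = k
        · rw [h2, hσk]; exact hjF
        rw [hσo x h1 h2]
        exact hF'sub (hm' x (hmemF' x hx h1 h2))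
      · intro x
        by_cases h1 : x = j
        · rw [h1, hσj, hσk]
        by_cases h2 : x = k
        · rw [h2, hσk, hσj]
        rw [hσo x h1 h2]
        obtain ⟨e1, e2⟩ := hσ'njk x h1 h2
        rw [hσo _ e1 e2, hinv']
      · intro x hx
        by_cases h1 : x = j
        · rw [h1, hσj]; exact hkj
        by_cases h2 : x = k
        · rw [h2, hσk]; exact fun h => hkj h.symm
        rw [hσo x h1 h2]
        exact hne' x (hmemF' x hx h1 h2)
      · intro x hx
        have h1 : x ≠ j := fun h => hx (h ▸ hjF)
        have h2 : x ≠ k := fun h => hx (h ▸ hkF)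
        rw [hσo x h1 h2]
        exact hid' x (fun h => hx (hF'sub h))
      · have hFeq : F = insert j (insert k F') := by
          rw [hF', insert_erase hkFj, insert_erase hjF]
        have hjnot : j ∉ insert k F' := by
          simp only [mem_insert]
          rintro (h | h)
          · exact hkj h.symm
          · exact hjF' h
        have hsum1 : ∑ x ∈ F, D x (σ x)
            = D j k + D k j + ∑ x ∈ F', D x (σ' x) := by
          rw [hFeq, Finset.sum_insert hjnot, Finset.sum_insert hkF', hσj, hσk]
          have : ∑ x ∈ F', D x (σ x) = ∑ x ∈ F', D x (σ' x) := by
            refine Finset.sum_congr rfl fun x hx => ?_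
            rw [hσo x (fun h => hjF' (h ▸ hx)) (fun h => hkF' (h ▸ hx))]
          rw [this]; ring
        have hFei : F.erase i = insert j (insert k (F'.erase i)) := by
          have h1 : F'.erase i = ((F.erase i).erase j).erase k := by
            rw [hF']
            rw [Finset.erase_right_comm (a := k) (b := i)]
            rw [Finset.erase_right_comm (a := j) (b := i)]
          rw [h1, insert_erase hk, insert_erase hj]
        have hjnot2 : j ∉ insert k (F'.erase i) := by
          simp only [mem_insert]
          rintro (h | h)
          · exact hkj h.symm
          · exact hjF' (erase_subset _ _ h)
        have hknot2 : k ∉ F'.erase i := fun h => hkF' (erase_subset _ _ h)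
        have hsum2 : ∑ x ∈ F.erase i, D i x
            = D i j + D i k + ∑ x ∈ F'.erase i, D i x := by
          rw [hFei, Finset.sum_insert hjnot2, Finset.sum_insert hknot2]; ring
        have htr : D j k ≤ D i j + D i k := by
          have := htri j k i
          have h2 := hsymm j i
          linarith
        rw [hsum1, hsum2]
        have : D k j = D j k := hsymm k j
        linarith

set_option maxHeartbeats 2000000 in
lemma team_bound {n : ℕ} (hn : Even n) (hn2 : 2 ≤ n)
    (D : Fin n → Fin n → ℝ) (hD : IsDistMatrix D)
    (M : Fin n → Fin n)
    (hMmin : ∀ p : Fin n → Fin n, IsPM p → pmWeight D M ≤ pmWeight D p)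
    (s : TTP2Schedule n) (i : Fin n) :
    (∑ j ∈ Finset.univ.erase i, D i j) + pmWeight D M ≤ s.travel D i := by
  classical
  obtain ⟨hdiag, hsymm, hnonneg, htri⟩ := hD
  set L := 2 * (n - 1) with hLdef
  have hL2 : 2 ≤ L := by omega
  set v : ℕ → Fin n := fun d => if d < L ∧ s.home d i = false then s.opp d i else i with hv
  have hv_ne : ∀ d, v d ≠ i ↔ (d < L ∧ s.home d i = false) := by
    intro d
    constructor
    · intro h
      by_contra hc
      exact h (by simp only [hv]; rw [if_neg hc])
    · rintro ⟨h1, h2⟩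
      simp only [hv]
      rw [if_pos ⟨h1, h2⟩]
      exact s.opp_ne d (by omega) i
  have hveq : ∀ d, v d ≠ i → v d = s.opp d i := by
    intro d h
    have hc := (hv_ne d).mp h
    simp only [hv]
    rw [if_pos hc]
  have hA_all : ∀ d, v d ≠ i → d < L := fun d h => ((hv_ne d).mp h).1
  set A := (Finset.range L).filter (fun d => ¬ v d = i) with hA
  have hmemA : ∀ d, d ∈ A ↔ v d ≠ i := by
    intro d
    simp only [hA, mem_filter, mem_range]
    exact ⟨fun h => h.2, fun h => ⟨hA_all d h, h⟩⟩
  have hvinj : ∀ d ∈ A, ∀ d' ∈ A, v d = v d' → d = d' := by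
    intro d hd d' hd' hvv
    have hdne := (hmemA d).mp hd
    have hdne' := (hmemA d').mp hd'
    have h1 := (hv_ne d).mp hdne
    have h1' := (hv_ne d').mp hdne'
    have hEU := s.plays_once i (v d) (Ne.symm hdne)
    have pd : (d < 2 * (n - 1) ∧ s.opp d i = v d ∧ s.home d i = false) :=
      ⟨by omega, (hveq d hdne).symm, h1.2⟩
    have pd' : (d' < 2 * (n - 1) ∧ s.opp d' i = v d ∧ s.home d' i = false) :=
      ⟨by omega, ((hveq d' hdne').symm).trans hvv.symm, h1'.2⟩
    exact hEU.unique pd pd'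
  have h3 : ∀ d, d ∈ A → d + 1 ∈ A → d + 2 ∈ A → False := by
    intro d h1 h2 h3'
    have e1 := (hv_ne d).mp ((hmemA d).mp h1)
    have e2 := (hv_ne (d+1)).mp ((hmemA _).mp h2)
    have e3 := (hv_ne (d+2)).mp ((hmemA _).mp h3')
    exact s.bounded_by_two d (by omega) i ⟨by rw [e1.2, e2.2], by rw [e2.2, e3.2]⟩
  have hvenue : ∀ d, d < L → s.venue d i = v d := by
    intro d hd
    by_cases h : s.home d i = false
    · have : s.venue d i = s.opp d i := by
        unfold TTP2Schedule.venue
        rw [h]; simp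
      rw [this]
      simp only [hv]
      rw [if_pos ⟨hd, h⟩]
    · have hh : s.home d i = true := by
        cases hhh : s.home d i
        · exact absurd hhh h
        · rfl
      have : s.venue d i = i := by
        unfold TTP2Schedule.venue
        rw [hh]; simp
      rw [this]
      simp only [hv]
      rw [if_neg (by rw [hh]; simp)]
  have hvL : v L = i := by
    simp only [hv]
    rw [if_neg (by omega)]
  have htravel : s.travel D i = D i (v 0) + ∑ d ∈ Finset.range L, D (v d) (v (d + 1)) := by
    unfold TTP2Schedule.travel
    rw [← hLdef]
    have hL1 : L - 1 + 1 = L := by omega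
    have hs : ∑ d ∈ Finset.range (L-1), D (s.venue d i) (s.venue (d+1) i)
        = ∑ d ∈ Finset.range (L-1), D (v d) (v (d+1)) := by
      refine Finset.sum_congr rfl fun d hd => ?_
      have hdlt := mem_range.mp hd
      rw [hvenue d (by omega), hvenue (d+1) (by omega)]
    rw [hs, hvenue 0 (by omega), hvenue (L-1) (by omega)]
    rw [show Finset.range L = Finset.range ((L-1)+1) by rw [hL1]]
    rw [Finset.sum_range_succ, hL1, hvL]
    ring
  set Q := (Finset.range L).filter (fun d => v d = i ∧ ¬ v (d+1) = i) with hQ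
  set starts := A.filter (fun d => d = 0 ∨ v (d - 1) = i) with hstarts
  set ends := A.filter (fun d => v (d+1) = i) with hends
  set PP := A.filter (fun d => ¬ v (d+1) = i) with hPP
  have hsplit : ∑ d ∈ Finset.range L, D (v d) (v (d+1))
      = (∑ d ∈ Q, D i (v (d+1))) + ((∑ d ∈ ends, D (v d) i) + ∑ d ∈ PP, D (v d) (v (d+1))) := by
    rw [← Finset.sum_filter_add_sum_filter_not (Finset.range L) (fun d => v d = i)
      (fun d => D (v d) (v (d+1)))]
    congr 1
    · rw [← Finset.sum_filter_add_sum_filter_not ((Finset.range L).filter (fun d => v d = i))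
        (fun d => v (d+1) = i) (fun d => D (v d) (v (d+1)))]
      have hz : ∑ d ∈ ((Finset.range L).filter (fun d => v d = i)).filter (fun d => v (d+1) = i),
          D (v d) (v (d+1)) = 0 := by
        refine Finset.sum_eq_zero fun d hd => ?_
        obtain ⟨hd1, hd2⟩ := mem_filter.mp hd
        rw [(mem_filter.mp hd1).2, hd2, hdiag]
      rw [hz, zero_add]
      have heq : ((Finset.range L).filter (fun d => v d = i)).filter (fun d => ¬ v (d+1) = i)
          = Q := by
        rw [Finset.filter_filter, hQ]
      rw [heq]
      refine Finset.sum_congr rfl fun d hd => ?_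
      rw [hQ] at hd
      rw [(mem_filter.mp hd).2.1]
    · have hAeq : (Finset.range L).filter (fun d => ¬ v d = i) = A := hA.symm
      rw [hAeq, ← Finset.sum_filter_add_sum_filter_not A (fun d => v (d+1) = i)
        (fun d => D (v d) (v (d+1))), ← hends, ← hPP]
      congr 1
      refine Finset.sum_congr rfl fun d hd => ?_
      rw [hends] at hd
      rw [(mem_filter.mp hd).2]
  have himg : Q.image (· + 1) = starts.erase 0 := by
    ext e
    simp only [mem_image, mem_erase, hQ, hstarts, hA, mem_filter, mem_range]
    constructor
    · rintro ⟨d, ⟨hdL, hdi, hdi1⟩, rfl⟩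
      refine ⟨by omega, ⟨⟨hA_all _ hdi1, hdi1⟩, Or.inr ?_⟩⟩
      simpa using hdi
    · rintro ⟨he0, ⟨⟨heL, hei⟩, hstart⟩⟩
      rcases hstart with h | h
      · exact absurd h he0
      · refine ⟨e - 1, ⟨by omega, h, ?_⟩, by omega⟩
        have : e - 1 + 1 = e := by omega
        rw [this]
        exact hei
  have hQsum : ∑ d ∈ Q, D i (v (d+1)) = ∑ e ∈ starts.erase 0, D i (v e) := by
    have hh := Finset.sum_image (s := Q) (f := fun e => D i (v e)) (g := (· + 1))
      (fun a _ b _ h => by simpa using h)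
    rw [himg] at hh
    exact hh.symm
  have hstarts0 : D i (v 0) + ∑ e ∈ starts.erase 0, D i (v e) = ∑ e ∈ starts, D i (v e) := by
    by_cases h0 : 0 ∈ starts
    · exact Finset.add_sum_erase starts (fun e => D i (v e)) h0
    · rw [Finset.erase_eq_of_notMem h0]
      have hv0 : v 0 = i := by
        by_contra hc
        refine h0 ?_
        rw [hstarts, mem_filter]
        exact ⟨(hmemA 0).mpr hc, Or.inl rfl⟩
      rw [hv0, hdiag, zero_add]
  have hends_symm : ∑ d ∈ ends, D (v d) i = ∑ d ∈ ends, D i (v d) :=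
    Finset.sum_congr rfl fun d _ => hsymm _ _
  have hunion : starts ∪ ends = A := by
    apply Finset.Subset.antisymm
    · rw [hstarts, hends]
      exact union_subset (filter_subset _ _) (filter_subset _ _)
    · intro d hd
      by_cases he : v (d + 1) = i
      · exact mem_union_right _ (by rw [hends, mem_filter]; exact ⟨hd, he⟩)
      · refine mem_union_left _ ?_
        rw [hstarts, mem_filter]
        refine ⟨hd, ?_⟩
        by_contra hc
        push_neg at hc
        obtain ⟨hd0, hdprev⟩ := hc
        have hm1 : d - 1 ∈ A := (hmemA _).mpr hdprev
        have he1 : d - 1 + 1 = d := by omega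
        have hm2 : d - 1 + 1 ∈ A := by rw [he1]; exact hd
        have hm3 : d - 1 + 2 ∈ A := by
          have : d - 1 + 2 = d + 1 := by omega
          rw [this]
          exact (hmemA _).mpr he
        exact h3 (d-1) hm1 hm2 hm3
  set SS := starts ∩ ends with hSS
  have hSE : (∑ d ∈ starts, D i (v d)) + ∑ d ∈ ends, D i (v d)
      = (∑ d ∈ A, D i (v d)) + ∑ d ∈ SS, D i (v d) := by
    rw [← Finset.sum_union_inter, hunion, ← hSS]
  have hsumA : ∑ d ∈ A, D i (v d) = ∑ j ∈ Finset.univ.erase i, D i j := by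
    refine Finset.sum_bij (fun d _ => v d) ?_ ?_ ?_ ?_
    · intro d hd
      exact mem_erase.mpr ⟨(hmemA d).mp hd, mem_univ _⟩
    · intro d hd d' hd' h
      exact hvinj d hd d' hd' h
    · intro j hj
      have hji : j ≠ i := (mem_erase.mp hj).1
      obtain ⟨d, ⟨hdL, hopp, hhome⟩, -⟩ := s.plays_once i j (Ne.symm hji)
      have hvd : v d = j := by
        simp only [hv]
        rw [if_pos ⟨by omega, hhome⟩]
        exact hopp
      have hdA : d ∈ A := (hmemA d).mpr (by rw [hvd]; exact hji)
      exact ⟨d, hdA, hvd⟩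
    · intro d hd
      rfl
  have hcardA : A.card = n - 1 := by
    have hbij : A.card = (Finset.univ.erase i).card := by
      refine Finset.card_bij (fun d _ => v d) ?_ ?_ ?_
      · intro d hd
        exact mem_erase.mpr ⟨(hmemA d).mp hd, mem_univ _⟩
      · intro d hd d' hd' h
        exact hvinj d hd d' hd' h
      · intro j hj
        have hji : j ≠ i := (mem_erase.mp hj).1
        obtain ⟨d, ⟨hdL, hopp, hhome⟩, -⟩ := s.plays_once i j (Ne.symm hji)
        have hvd : v d = j := by
          simp only [hv]
          rw [if_pos ⟨by omega, hhome⟩]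
          exact hopp
        have hdA : d ∈ A := (hmemA d).mpr (by rw [hvd]; exact hji)
        exact ⟨d, hdA, hvd⟩
    rw [hbij, card_erase_of_mem (mem_univ i), card_univ, Fintype.card_fin]
  have hPP_A : PP ⊆ A := by rw [hPP]; exact filter_subset _ _
  have hSS_A : SS ⊆ A := by
    rw [hSS, hstarts]
    exact (inter_subset_left).trans (filter_subset _ _)
  have hPP1_A : ∀ d ∈ PP, d + 1 ∈ A := by
    intro d hd
    rw [hPP] at hd
    exact (hmemA _).mpr (mem_filter.mp hd).2
  have hdisj1 : Disjoint PP (PP.image (· + 1)) := by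
    rw [Finset.disjoint_left]
    intro d hd hd'
    obtain ⟨d', hd'', hdd⟩ := mem_image.mp hd'
    subst hdd
    refine h3 d' (hPP_A hd'') (hPP_A hd) ?_
    exact hPP1_A _ hd
  have hdisjPS : Disjoint PP SS := by
    rw [Finset.disjoint_left]
    intro d hd hdS
    rw [hPP] at hd
    rw [hSS, hends] at hdS
    exact (mem_filter.mp hd).2 (mem_filter.mp (mem_of_mem_inter_right hdS)).2
  have hdisjIS : Disjoint (PP.image (· + 1)) SS := by
    rw [Finset.disjoint_left]
    intro d hd hdS
    obtain ⟨d', hd'', hdd⟩ := mem_image.mp hd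
    subst hdd
    rw [hSS, hstarts] at hdS
    have hst := (mem_filter.mp (mem_of_mem_inter_left hdS)).2
    rcases hst with h | h
    · omega
    · have : d' + 1 - 1 = d' := by omega
      rw [this] at h
      exact (hmemA d').mp (hPP_A hd'') h
  have hcover : PP ∪ PP.image (· + 1) ∪ SS = A := by
    apply Finset.Subset.antisymm
    · refine union_subset (union_subset hPP_A ?_) hSS_A
      intro d hd
      obtain ⟨d', hd'', hdd⟩ := mem_image.mp hd
      subst hdd
      exact hPP1_A _ hd''
    · intro d hd
      by_cases he : v (d + 1) = i
      · by_cases hs0 : d = 0 ∨ v (d - 1) = i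
        · refine mem_union_right _ ?_
          rw [hSS]
          refine mem_inter.mpr ⟨?_, ?_⟩
          · rw [hstarts, mem_filter]; exact ⟨hd, hs0⟩
          · rw [hends, mem_filter]; exact ⟨hd, he⟩
        · push_neg at hs0
          obtain ⟨hd0, hdprev⟩ := hs0
          refine mem_union_left _ (mem_union_right _ ?_)
          refine mem_image.mpr ⟨d - 1, ?_, by omega⟩
          rw [hPP, mem_filter]
          have he1 : d - 1 + 1 = d := by omega
          refine ⟨(hmemA _).mpr hdprev, ?_⟩
          rw [he1]
          exact (hmemA d).mp hd
      · refine mem_union_left _ (mem_union_left _ ?_)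
        rw [hPP, mem_filter]
        exact ⟨hd, he⟩
  have hcardPart : 2 * PP.card + SS.card = n - 1 := by
    have h1 : (PP ∪ PP.image (· + 1) ∪ SS).card = (PP ∪ PP.image (· + 1)).card + SS.card := by
      refine Finset.card_union_of_disjoint ?_
      rw [Finset.disjoint_union_left]
      exact ⟨hdisjPS, hdisjIS⟩
    have h2 : (PP ∪ PP.image (· + 1)).card = PP.card + (PP.image (· + 1)).card :=
      Finset.card_union_of_disjoint hdisj1
    have h3' : (PP.image (· + 1)).card = PP.card :=
      Finset.card_image_of_injective _ (fun a b h => by simpa using h)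
    rw [hcover] at h1
    omega
  have hSSodd : SS.card % 2 = 1 := by
    have hodd : (n - 1) % 2 = 1 := by obtain ⟨c, hc⟩ := hn; omega
    omega
  set dayOf : Fin n → ℕ := fun j => if h : ∃ d, d ∈ A ∧ v d = j then h.choose else 0
    with hdayOf
  have hday1 : ∀ d ∈ A, dayOf (v d) = d := by
    intro d hd
    have hex' : ∃ d', d' ∈ A ∧ v d' = v d := ⟨d, hd, rfl⟩
    simp only [hdayOf, dif_pos hex']
    exact hvinj _ hex'.choose_spec.1 _ hd hex'.choose_spec.2
  have hday2 : ∀ j : Fin n, j ≠ i → dayOf j ∈ A ∧ v (dayOf j) = j := by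
    intro j hj
    obtain ⟨d, ⟨hdL, hopp, hhome⟩, -⟩ := s.plays_once i j (Ne.symm hj)
    have hvd : v d = j := by
      simp only [hv]
      rw [if_pos ⟨by omega, hhome⟩]
      exact hopp
    have hdA : d ∈ A := (hmemA d).mpr (by rw [hvd]; exact hj)
    have hex' : ∃ d', d' ∈ A ∧ v d' = j := ⟨d, hdA, hvd⟩
    simp only [hdayOf, dif_pos hex']
    exact ⟨hex'.choose_spec.1, hex'.choose_spec.2⟩
  set FS := insert i (SS.image v) with hFS
  have hiSS : i ∉ SS.image v := by
    intro h
    obtain ⟨d, hd, hvd⟩ := mem_image.mp h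
    exact (hmemA d).mp (hSS_A hd) hvd
  have hcardFS : Even FS.card := by
    rw [hFS, card_insert_of_notMem hiSS,
      Finset.card_image_of_injOn (fun a ha b hb h => hvinj a (hSS_A ha) b (hSS_A hb) h)]
    rw [Nat.even_iff]
    omega
  obtain ⟨σ, hσmem, hσinv, hσne, hσid, hσsum⟩ :=
    pair_up D hsymm htri FS hcardFS i (mem_insert_self _ _)
  set p : Fin n → Fin n := fun k =>
    if k ∈ FS then σ k
    else if dayOf k ∈ PP then v (dayOf k + 1) else v (dayOf k - 1)
    with hp
  have hkA : ∀ k, k ∉ FS → k ≠ i ∧ dayOf k ∈ A ∧ v (dayOf k) = k := by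
    intro k hk
    have hki : k ≠ i := fun h => hk (by rw [h, hFS]; exact mem_insert_self _ _)
    exact ⟨hki, (hday2 k hki).1, (hday2 k hki).2⟩
  have hnotSS : ∀ k, k ∉ FS → dayOf k ∉ SS := by
    intro k hk hSSk
    refine hk ?_
    rw [hFS]
    refine mem_insert_of_mem ?_
    have := mem_image_of_mem v hSSk
    rwa [(hkA k hk).2.2] at this
  have hcases : ∀ k, k ∉ FS → dayOf k ∈ PP ∨ dayOf k ∈ PP.image (· + 1) := by
    intro k hk
    have hdA : dayOf k ∈ A := (hkA k hk).2.1
    rw [← hcover] at hdA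
    rcases mem_union.mp hdA with h | h
    · rcases mem_union.mp h with h' | h'
      · exact Or.inl h'
      · exact Or.inr h'
    · exact absurd h (hnotSS k hk)
  have hvd_notFS : ∀ d ∈ PP, v d ∉ FS := by
    intro d hd h
    rw [hFS] at h
    rcases mem_insert.mp h with h' | h'
    · exact (hmemA d).mp (hPP_A hd) h'
    · obtain ⟨d', hd', hvd'⟩ := mem_image.mp h'
      have hde : d' = d := hvinj d' (hSS_A hd') d (hPP_A hd) hvd'
      subst hde
      exact (Finset.disjoint_right.mp hdisjPS hd') hd
  have hvd1_notFS : ∀ d ∈ PP, v (d + 1) ∉ FS := by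
    intro d hd h
    rw [hFS] at h
    rcases mem_insert.mp h with h' | h'
    · exact (hmemA (d+1)).mp (hPP1_A d hd) h'
    · obtain ⟨d', hd', hvd'⟩ := mem_image.mp h'
      have hde : d' = d + 1 := hvinj d' (hSS_A hd') (d+1) (hPP1_A d hd) hvd'
      subst hde
      exact (Finset.disjoint_right.mp hdisjIS hd') (mem_image.mpr ⟨d, hd, rfl⟩)
  have hPP1notPP : ∀ d ∈ PP, d + 1 ∉ PP := by
    intro d hd h
    exact (Finset.disjoint_left.mp hdisj1 h) (mem_image.mpr ⟨d, hd, rfl⟩)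
  have hpd : ∀ d ∈ PP, p (v d) = v (d + 1) := by
    intro d hd
    rw [hp]
    simp only
    rw [if_neg (hvd_notFS d hd), hday1 d (hPP_A hd), if_pos hd]
  have hpd1 : ∀ d ∈ PP, p (v (d + 1)) = v d := by
    intro d hd
    rw [hp]
    simp only
    rw [if_neg (hvd1_notFS d hd), hday1 (d+1) (hPP1_A d hd), if_neg (hPP1notPP d hd)]
    norm_num
  have hFSp : ∀ k ∈ FS, p k = σ k := by
    intro k hk
    rw [hp]
    simp only
    rw [if_pos hk]
  have hppk : ∀ k, p (p k) = k := by
    intro k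
    by_cases hk : k ∈ FS
    · rw [hFSp k hk, hFSp (σ k) (hσmem k hk), hσinv]
    · rcases hcases k hk with hd | hd
      · have hvk := (hkA k hk).2.2
        have e1 : p k = v (dayOf k + 1) := by
          conv_lhs => rw [← hvk]
          exact hpd _ hd
        rw [e1, hpd1 _ hd, hvk]
      · obtain ⟨d', hd', hdd⟩ := mem_image.mp hd
        have hvk := (hkA k hk).2.2
        have hdd' : dayOf k = d' + 1 := hdd.symm
        rw [hdd'] at hvk
        have e1 : p k = v d' := by
          conv_lhs => rw [← hvk]
          exact hpd1 _ hd'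
        rw [e1, hpd _ hd', hvk]
  have hpne : ∀ k, p k ≠ k := by
    intro k
    by_cases hk : k ∈ FS
    · rw [hFSp k hk]; exact hσne k hk
    · rcases hcases k hk with hd | hd
      · have hvk := (hkA k hk).2.2
        have e1 : p k = v (dayOf k + 1) := by
          conv_lhs => rw [← hvk]
          exact hpd _ hd
        rw [e1]
        intro h
        have := hvinj _ (hPP1_A _ hd) _ (hPP_A hd) (h.trans hvk.symm)
        omega
      · obtain ⟨d', hd', hdd⟩ := mem_image.mp hd
        have hvk := (hkA k hk).2.2
        have hdd' : dayOf k = d' + 1 := hdd.symm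
        rw [hdd'] at hvk
        have e1 : p k = v d' := by
          conv_lhs => rw [← hvk]
          exact hpd1 _ hd'
        rw [e1]
        intro h
        have := hvinj _ (hPP_A hd') _ (hPP1_A _ hd') (h.trans hvk.symm)
        omega
  have hinjPP1 : ∀ a ∈ PP, ∀ b ∈ PP, v (a+1) = v (b+1) → a = b := by
    intro a ha b hb h
    have := hvinj _ (hPP1_A a ha) _ (hPP1_A b hb) h
    omega
  have hUeq : (Finset.univ : Finset (Fin n))
      = FS ∪ (PP.image v ∪ PP.image (fun d => v (d+1))) := by
    refine Finset.Subset.antisymm ?_ (subset_univ _)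
    intro k _
    by_cases hk : k ∈ FS
    · exact mem_union_left _ hk
    · rcases hcases k hk with hd | hd
      · exact mem_union_right _ (mem_union_left _ (mem_image.mpr ⟨dayOf k, hd, (hkA k hk).2.2⟩))
      · obtain ⟨d', hd', hdd⟩ := mem_image.mp hd
        refine mem_union_right _ (mem_union_right _ (mem_image.mpr ⟨d', hd', ?_⟩))
        have hvk := (hkA k hk).2.2
        rw [← hdd] at hvk
        exact hvk
  have hd2 : Disjoint FS (PP.image v ∪ PP.image (fun d => v (d+1))) := by
    rw [Finset.disjoint_union_right]
    constructor
    · rw [Finset.disjoint_left]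
      intro k hk hk'
      obtain ⟨d, hd, rfl⟩ := mem_image.mp hk'
      exact hvd_notFS d hd hk
    · rw [Finset.disjoint_left]
      intro k hk hk'
      obtain ⟨d, hd, rfl⟩ := mem_image.mp hk'
      exact hvd1_notFS d hd hk
  have hd3 : Disjoint (PP.image v) (PP.image (fun d => v (d+1))) := by
    rw [Finset.disjoint_left]
    intro k hk hk'
    obtain ⟨d, hd, rfl⟩ := mem_image.mp hk
    obtain ⟨d', hd', he⟩ := mem_image.mp hk'
    have hde : d' + 1 = d := hvinj _ (hPP1_A d' hd') _ (hPP_A hd) he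
    exact hPP1notPP d' hd' (by rw [hde]; exact hd)
  have e2 : ∑ k ∈ PP.image v, D k (p k) = ∑ d ∈ PP, D (v d) (v (d+1)) := by
    rw [Finset.sum_image (fun a ha b hb h => hvinj a (hPP_A ha) b (hPP_A hb) h)]
    exact Finset.sum_congr rfl fun d hd => by rw [hpd d hd]
  have e3 : ∑ k ∈ PP.image (fun d => v (d+1)), D k (p k) = ∑ d ∈ PP, D (v (d+1)) (v d) := by
    rw [Finset.sum_image (fun a ha b hb h => hinjPP1 a ha b hb h)]
    exact Finset.sum_congr rfl fun d hd => by rw [hpd1 d hd]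
  have hsum_univ : ∑ k, D k (p k)
      = (∑ k ∈ FS, D k (σ k))
        + ((∑ d ∈ PP, D (v d) (v (d+1))) + ∑ d ∈ PP, D (v (d+1)) (v d)) := by
    rw [show (Finset.univ : Finset (Fin n)) = _ from hUeq]
    rw [Finset.sum_union hd2, Finset.sum_union hd3, e2, e3]
    congr 1
    exact Finset.sum_congr rfl fun k hk => by rw [hFSp k hk]
  have hFSerase : FS.erase i = SS.image v := by
    rw [hFS, erase_insert hiSS]
  have hSSsum : ∑ k ∈ SS.image v, D i k = ∑ d ∈ SS, D i (v d) := by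
    rw [Finset.sum_image (fun a ha b hb h => hvinj a (hSS_A ha) b (hSS_A hb) h)]
  have hsymmPP : ∑ d ∈ PP, D (v (d+1)) (v d) = ∑ d ∈ PP, D (v d) (v (d+1)) :=
    Finset.sum_congr rfl fun d _ => hsymm _ _
  have hple : pmWeight D p ≤ (∑ d ∈ SS, D i (v d)) + ∑ d ∈ PP, D (v d) (v (d+1)) := by
    unfold pmWeight
    rw [hsum_univ]
    have h1 : ∑ k ∈ FS, D k (σ k) ≤ 2 * ∑ d ∈ SS, D i (v d) := by
      calc ∑ k ∈ FS, D k (σ k) ≤ 2 * ∑ k ∈ FS.erase i, D i k := hσsum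
        _ = 2 * ∑ d ∈ SS, D i (v d) := by rw [hFSerase, hSSsum]
    linarith [hsymmPP]
  have hpm : pmWeight D M ≤ (∑ d ∈ SS, D i (v d)) + ∑ d ∈ PP, D (v d) (v (d+1)) :=
    (hMmin p ⟨hppk, hpne⟩).trans hple
  rw [htravel, hsplit, hQsum, hends_symm]
  linarith [hstarts0, hSE, hsumA, hpm]

/-- Any feasible TTP-2 schedule has total traveling distance at
least the independent lower bound `2·D_G + n·D_M`. -/
theorem ttp2_independent_lower_bound (n : ℕ) (hn : Even n)
    (D : Fin n → Fin n → ℝ) (hD : IsDistMatrix D)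
    (M : Fin n → Fin n) (hM : IsPM M)
    (hMmin : ∀ p : Fin n → Fin n, IsPM p → pmWeight D M ≤ pmWeight D p)
    (s : TTP2Schedule n) :
    2 * sumPairs D + (n : ℝ) * pmWeight D M ≤ s.total D := by
  rcases Nat.eq_zero_or_pos n with h0 | hpos
  · subst h0
    simp [TTP2Schedule.total, sumPairs, pmWeight]
  · have hn2 : 2 ≤ n := by obtain ⟨c, hc⟩ := hn; omega
    have key : ∀ i : Fin n,
        (∑ j ∈ Finset.univ.erase i, D i j) + pmWeight D M ≤ s.travel D i :=
      fun i => team_bound hn hn2 D hD M hMmin s i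
    have hsum := Finset.sum_le_sum (fun i (_ : i ∈ Finset.univ) => key i)
    have hlhs : ∑ i : Fin n, ((∑ j ∈ Finset.univ.erase i, D i j) + pmWeight D M)
        = 2 * sumPairs D + (n : ℝ) * pmWeight D M := by
      rw [Finset.sum_add_distrib, Finset.sum_const, card_univ, Fintype.card_fin,
        nsmul_eq_mul]
      congr 1
      unfold sumPairs
      have he : ∀ i : Fin n, ∑ j ∈ Finset.univ \ {i}, D i j
          = ∑ j ∈ Finset.univ.erase i, D i j := by
        intro i
        rw [Finset.sdiff_singleton_eq_erase]
      rw [Finset.sum_congr rfl fun i _ => he i]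
      ring
    rw [← hlhs]
    exact hsum
end

section
/- Let H be the complete graph on m vertices where m is even, with nonnegative edge weights, and let D_H be the total weight of all edges of H. Then the minimum weight of a perfect matching of H is at most D_H/(m−1). -/
open Finset

/-! ### Round-robin matchings -/

/-- Round `r` of the round-robin schedule on `Option (ZMod n)`:
`none` is paired with `r`, and `x` with `2*r - x`. -/
def rrRound {n : ℕ} (r : ZMod n) : Option (ZMod n) → Option (ZMod n)
  | none => some r
  | some x => if x = r then none else some (2 * r - x)

section RR
variable {n : ℕ} [NeZero n] (h2 : IsUnit (2 : ZMod n))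

lemma rrRound_none (r : ZMod n) : rrRound r none = some r := rfl

lemma rrRound_some (r x : ZMod n) :
    rrRound r (some x) = if x = r then none else some (2 * r - x) := rfl

include h2

lemma rr_cancel {a b : ZMod n} (h : 2 * a = 2 * b) : a = b := by
  obtain ⟨u, hu⟩ := h2
  have := congrArg (fun z => (↑u⁻¹ : ZMod n) * z) h
  simpa [← hu, ← mul_assoc] using this

lemma rr_invol (r : ZMod n) : ∀ v, rrRound r (rrRound r v) = v := by
  intro v
  match v with
  | none => simp [rrRound_none, rrRound_some]
  | some x =>
    by_cases hx : x = r
    · simp [rrRound_none, rrRound_some, hx]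
    · have hne : ¬ (2 * r - x = r) := fun h => hx (by linear_combination -h)
      rw [rrRound_some, if_neg hx, rrRound_some, if_neg hne]
      congr 1
      ring

lemma rr_ne (r : ZMod n) : ∀ v, rrRound r v ≠ v := by
  intro v
  match v with
  | none => simp [rrRound_none]
  | some x =>
    by_cases hx : x = r
    · simp [rrRound_some, hx]
    · rw [rrRound_some, if_neg hx]
      simp only [ne_eq, Option.some.injEq]
      intro h
      apply hx
      exact rr_cancel h2 (by linear_combination -h)

/-- For a fixed vertex `v`, as `r` ranges over all rounds, the partner of `v`
ranges exactly over all other vertices. -/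
lemma rr_sum (v : Option (ZMod n)) (g : Option (ZMod n) → ℝ) :
    ∑ r : ZMod n, g (rrRound r v) = ∑ u ∈ Finset.univ \ {v}, g u := by
  refine Finset.sum_bij (fun r _ => rrRound r v) ?_ ?_ ?_ ?_
  · intro r _
    exact Finset.mem_sdiff.mpr ⟨Finset.mem_univ _, by simpa using rr_ne h2 r v⟩
  · intro r₁ _ r₂ _ h
    match v with
    | none => simpa [rrRound_none] using h
    | some x =>
      rw [rrRound_some, rrRound_some] at h
      by_cases h1 : x = r₁ <;> by_cases h2' : x = r₂
      · rw [← h1, ← h2']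
      · rw [if_pos h1, if_neg h2'] at h; simp at h
      · rw [if_neg h1, if_pos h2'] at h; simp at h
      · rw [if_neg h1, if_neg h2'] at h
        have := Option.some.inj h
        exact rr_cancel h2 (by linear_combination this)
  · intro u hu
    simp only [Finset.mem_sdiff, Finset.mem_univ, true_and, Finset.mem_singleton] at hu
    match v with
    | none =>
      match u with
      | none => exact absurd rfl hu
      | some y => exact ⟨y, Finset.mem_univ _, rfl⟩
    | some x =>
      match u with
      | none =>
        refine ⟨x, Finset.mem_univ _, ?_⟩
        show rrRound x (some x) = none
        rw [rrRound_some, if_pos rfl]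
      | some y =>
        have hyx : y ≠ x := fun h => hu (by rw [h])
        obtain ⟨u, hu⟩ := id h2
        refine ⟨↑u⁻¹ * (y + x), Finset.mem_univ _, ?_⟩
        have h2r : (2 : ZMod n) * ((↑u⁻¹ : ZMod n) * (y + x)) = y + x := by
          rw [← hu, ← mul_assoc, Units.mul_inv, one_mul]
        have hxne : x ≠ (↑u⁻¹ : ZMod n) * (y + x) := by
          intro h
          apply hyx
          have h3 : 2 * x = y + x := by conv_lhs => rw [h, h2r]
          linear_combination -h3
        show rrRound ((↑u⁻¹ : ZMod n) * (y + x)) (some x) = some y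
        rw [rrRound_some, if_neg hxne]
        congr 1
        linear_combination h2r
  · intro r _
    rfl

end RR

/-- In the complete graph on an even number `m` of vertices with
nonnegative edge weights `w` and total edge weight `D_H`, the minimum weight of a
perfect matching is at most `D_H / (m - 1)`: i.e., some perfect matching has
weight at most `D_H / (m - 1)`. -/
theorem min_matching_le_total_div (m : ℕ) (hm : Even m) (hm2 : 2 ≤ m)
    (w : Fin m → Fin m → ℝ)
    (hsymm : ∀ i j, i ≠ j → w i j = w j i)
    (hnn : ∀ i j, i ≠ j → 0 ≤ w i j) :
    ∃ p : Fin m → Fin m, IsPM p ∧ pmWeight w p ≤ sumPairs w / ((m : ℝ) - 1) := by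
  obtain ⟨k, rfl⟩ := Nat.exists_eq_add_of_le' hm2
  set N := k + 1 with hN
  have hodd : Odd N := Nat.odd_iff.mpr (by have := Nat.even_iff.mp hm; omega)
  have h2 : IsUnit (2 : ZMod N) := by
    have hcop : Nat.Coprime 2 N := (Nat.prime_two.coprime_iff_not_dvd).mpr (by
      have := Nat.odd_iff.mp hodd; omega)
    have := (ZMod.isUnit_iff_coprime 2 N).mpr hcop
    simpa using this
  -- the equivalence between `Fin (k+2)` and `Option (ZMod (k+1))`
  let e : Fin (k + 2) ≃ Option (ZMod N) := finSuccEquiv N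
  let P : ZMod N → Fin (k + 2) → Fin (k + 2) := fun r i => e.symm (rrRound r (e i))
  have hPM : ∀ r, IsPM (P r) := by
    intro r
    constructor
    · intro i
      show e.symm (rrRound r (e (e.symm (rrRound r (e i))))) = i
      rw [Equiv.apply_symm_apply, rr_invol h2, Equiv.symm_apply_apply]
    · intro i h
      have h' : rrRound r (e i) = e i := by
        have := congrArg e h
        simpa [P] using this
      exact rr_ne h2 r (e i) h'
  set T : ℝ := ∑ i, ∑ j ∈ Finset.univ \ {i}, w i j with hT
  have hsum : (∑ r : ZMod N, ∑ i, w i (P r i)) = T := by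
    calc ∑ r : ZMod N, ∑ i, w i (P r i)
        = ∑ r : ZMod N, ∑ v : Option (ZMod N), w (e.symm v) (e.symm (rrRound r v)) := by
          refine Finset.sum_congr rfl fun r _ => ?_
          refine (Fintype.sum_equiv e.symm
            (fun v => w (e.symm v) (e.symm (rrRound r v)))
            (fun i => w i (P r i)) fun v => ?_).symm
          simp [P]
      _ = ∑ v : Option (ZMod N), ∑ r : ZMod N, w (e.symm v) (e.symm (rrRound r v)) :=
          Finset.sum_comm
      _ = ∑ v : Option (ZMod N), ∑ u ∈ Finset.univ \ {v}, w (e.symm v) (e.symm u) := by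
          refine Finset.sum_congr rfl fun v _ => ?_
          exact rr_sum h2 v (fun u => w (e.symm v) (e.symm u))
      _ = T := by
          rw [hT]
          refine Fintype.sum_equiv e.symm
            (fun v => ∑ u ∈ Finset.univ \ {v}, w (e.symm v) (e.symm u))
            (fun i => ∑ j ∈ Finset.univ \ {i}, w i j) fun v => ?_
          refine Finset.sum_nbij' (fun u => e.symm u) (fun j => e j) ?_ ?_ ?_ ?_ ?_
          · intro u hu
            simp only [Finset.mem_sdiff, Finset.mem_univ, true_and,
              Finset.mem_singleton] at hu ⊢
            exact fun h => hu (e.symm.injective h)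
          · intro j hj
            simp only [Finset.mem_sdiff, Finset.mem_univ, true_and,
              Finset.mem_singleton] at hj ⊢
            intro h
            apply hj
            rw [← h]
            simp
          · intro u _; simp
          · intro j _; simp
          · intro u _; rfl
  have hNpos : (0:ℝ) < (N:ℝ) := by positivity
  have hcard : (Finset.univ : Finset (ZMod N)).card = N := by
    simpa using ZMod.card N
  have hconst : ∑ _r : ZMod N, T / (N:ℝ) = T := by
    rw [Finset.sum_const, hcard, nsmul_eq_mul]
    field_simp
  obtain ⟨r, _, hr⟩ := Finset.exists_le_of_sum_le
    (Finset.univ_nonempty (α := ZMod N))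
    (le_of_eq (hsum.trans hconst.symm))
  refine ⟨P r, hPM r, ?_⟩
  have hm1 : ((k + 2 : ℕ) : ℝ) - 1 = (N:ℝ) := by
    rw [hN]; push_cast; ring
  rw [pmWeight, sumPairs, hm1, ← hT]
  rw [div_div, mul_comm, ← div_div]
  linarith
end

section
/- Let H be the complete graph on m vertices (m ≥ 4) with nonnegative edge weights w, total edge weight D_H, and let M_H be a perfect matching of H with weight D_{M_H}; for a vertex v let p(v) denote its M_H-partner. Then there exist a vertex v and a vertex x ∉ {v, p(v)} such that the sum of w(v,u) over all vertices u ∉ {v, p(v), x} is at most 2(m−3)(D_H − D_{M_H})/(m(m−2)). -/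
open Finset

/-- In the complete graph on `m ≥ 4` (even) vertices with
nonnegative edge weights `w`, total weight `D_H`, and a perfect matching `p`
of weight `D_{M_H}`, there exist a vertex `v` and a vertex `x ∉ {v, p v}` such
that the sum of `w v u` over all `u ∉ {v, p v, x}` is at most
`2 (m-3) (D_H - D_{M_H}) / (m (m-2))`. -/
theorem exists_vertex_and_x_small_sum (m : ℕ) (hm : Even m) (hm4 : 4 ≤ m)
    (w : Fin m → Fin m → ℝ)
    (hsymm : ∀ i j, i ≠ j → w i j = w j i)
    (hnn : ∀ i j, i ≠ j → 0 ≤ w i j)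
    (p : Fin m → Fin m) (hp : IsPM p) :
    ∃ v x : Fin m, x ≠ v ∧ x ≠ p v ∧
      ∑ u ∈ Finset.univ \ {v, p v, x}, w v u ≤
        2 * ((m : ℝ) - 3) * (sumPairs w - pmWeight w p) / ((m : ℝ) * ((m : ℝ) - 2)) := by
  obtain ⟨hpp, hpne⟩ := hp
  have hm0 : 0 < m := by omega
  have : Nonempty (Fin m) := ⟨⟨0, hm0⟩⟩
  set S : Fin m → ℝ := fun v => ∑ u ∈ Finset.univ \ {v, p v}, w v u with hS
  have hT : ∑ v, S v = 2 * (sumPairs w - pmWeight w p) := by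
    have h1 : ∀ v : Fin m, S v = (∑ u ∈ Finset.univ \ {v}, w v u) - w v (p v) := by
      intro v
      have hmem : p v ∈ Finset.univ \ {v} := by
        simp [hpne v]
      have hset : Finset.univ \ {v, p v} = (Finset.univ \ {v}).erase (p v) := by
        ext u; simp [Finset.mem_erase]; tauto
      show (∑ u ∈ Finset.univ \ {v, p v}, w v u) = _
      rw [hset, Finset.sum_erase_eq_sub hmem]
    rw [Finset.sum_congr rfl (fun v _ => h1 v), Finset.sum_sub_distrib]
    unfold sumPairs pmWeight
    ring
  obtain ⟨v, -, hvmin⟩ := Finset.exists_min_image Finset.univ S ⟨Classical.arbitrary (Fin m), Finset.mem_univ _⟩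
  have hmS : (m : ℝ) * S v ≤ 2 * (sumPairs w - pmWeight w p) := by
    rw [← hT]
    calc (m : ℝ) * S v = ∑ _u : Fin m, S v := by
          rw [Finset.sum_const, Finset.card_univ, Fintype.card_fin, nsmul_eq_mul]
      _ ≤ ∑ u, S u := Finset.sum_le_sum (fun u _ => hvmin u (Finset.mem_univ u))
  set A : Finset (Fin m) := Finset.univ \ {v, p v} with hA
  have hcardpair : ({v, p v} : Finset (Fin m)).card = 2 := by
    rw [Finset.card_insert_of_notMem (by simp [(hpne v).symm]), Finset.card_singleton]
  have hcardA : A.card = m - 2 := by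
    rw [hA, Finset.card_sdiff_of_subset (Finset.subset_univ _), Finset.card_univ, Fintype.card_fin, hcardpair]
  have hAne : A.Nonempty := by
    rw [← Finset.card_pos, hcardA]; omega
  obtain ⟨x, hxA, hxmax⟩ := Finset.exists_max_image A (w v) hAne
  have hxv : x ≠ v ∧ x ≠ p v := by
    rw [hA] at hxA; simp at hxA; tauto
  have h2 : S v ≤ ((m : ℝ) - 2) * w v x := by
    have := Finset.sum_le_card_nsmul A (w v) (w v x) (fun u hu => hxmax u hu)
    rw [hcardA, nsmul_eq_mul] at this
    have hc : ((m - 2 : ℕ) : ℝ) = (m : ℝ) - 2 := by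
      push_cast [Nat.cast_sub (by omega : 2 ≤ m)]; ring
    rw [hc] at this
    exact this
  refine ⟨v, x, hxv.1, hxv.2, ?_⟩
  have hset3 : Finset.univ \ {v, p v, x} = A.erase x := by
    rw [hA]; ext u; simp [Finset.mem_erase]; tauto
  rw [hset3, Finset.sum_erase_eq_sub hxA]
  have hsum : (∑ u ∈ A, w v u) = S v := rfl
  rw [hsum]
  have hmR : (4 : ℝ) ≤ (m : ℝ) := by exact_mod_cast hm4
  have hpos : 0 < (m : ℝ) * ((m : ℝ) - 2) := by nlinarith
  rw [le_div_iff₀ hpos]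
  nlinarith [hmS, h2, mul_le_mul_of_nonneg_left h2 (by linarith : (0:ℝ) ≤ (m:ℝ)),
    mul_le_mul_of_nonneg_left hmS (by linarith : (0:ℝ) ≤ (m:ℝ) - 3)]
end
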